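/- arXiv:2310.09379 — 7 statements merged into one kernel-verified Lean document; each statement's English description precedes it below -/
import Mathlib

section
/- For any k-uniform hypergraph G on vertex set [n] and any integer 0 ≤ ℓ ≤ k, the sum over all ℓ-element subsets H of [n] of d(H)² is at most (C(k,ℓ)·C(k-1,ℓ)/C(n-1,ℓ))·|E(G)|² + C(k-1,ℓ-1)·C(n-ℓ-1,k-ℓ)·|E(G)|, where d(H) denotes the number of edges of G containing H. -/
/-!
For `ℓ = 1` this is de Caen's bound. Write `d v` for the degrees, `m = |G|`, `A = C(n-2,k-1)` and
`w v = d v - c`. Since two distinct vertices lie in `C(n-2,k-2)` of the `k`-sets and one vertex in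
`C(n-1,k-1)` of them, `∑_{|E| = k} (∑_{v ∈ E} w v)²` is a quadratic form in `w` with explicit
coefficients, and AM-GM on the edges, `2 A ∑_{v ∈ E} w v ≤ A² + (∑_{v ∈ E} w v)²`, gives
`A ∑ d² ≤ A² m + A n c² + C(n-2,k-2) (k m - n c)²`; the optimal `c` yields the bound.

For larger `ℓ`, every `ℓ`-set `H` is counted once for each `x ∈ H` by
`ℓ ∑_{|H| = ℓ} d(H)² = ∑_x ∑_{|H'| = ℓ-1, x ∉ H'} d_x(H')²`, where `d_x` is the codegree in the
link `G.memberSubfamily x` of `x`, a `(k-1)`-uniform family on `n-1` vertices with `d x` members.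
By induction each inner sum is at most a quadratic polynomial in `d x`, and the case `ℓ = 1`
bounds `∑ d²`.
-/

open Finset

def beyQuadCoeff (n k ℓ : ℕ) : ℚ :=
  ((k.choose ℓ * (k - 1).choose ℓ : ℕ) : ℚ) / (((n - 1).choose ℓ : ℕ) : ℚ)

def beyLinCoeff (n k ℓ : ℕ) : ℚ :=
  (((k - 1).choose (ℓ - 1) * (n - ℓ - 1).choose (k - ℓ) : ℕ) : ℚ)

theorem beyQuadCoeff_nonneg (n k ℓ : ℕ) : 0 ≤ beyQuadCoeff n k ℓ := by
  unfold beyQuadCoeff; positivity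

theorem beyLinCoeff_nonneg (n k ℓ : ℕ) : 0 ≤ beyLinCoeff n k ℓ := by
  unfold beyLinCoeff; positivity

theorem beyQuadCoeff_zero (n k : ℕ) : beyQuadCoeff n k 0 = 1 := by
  simp [beyQuadCoeff]

theorem beyQuadCoeff_one {n : ℕ} (hn : 1 ≤ n) (k : ℕ) :
    beyQuadCoeff n k 1 = k * (k - 1) / (n - 1) := by
  rcases Nat.eq_zero_or_pos k with rfl | hk
  · simp [beyQuadCoeff]
  · simp [beyQuadCoeff, Nat.cast_sub hn, Nat.cast_sub hk]

theorem beyLinCoeff_one (n k : ℕ) : beyLinCoeff n k 1 = (n - 2).choose (k - 1) := by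
  simp [beyLinCoeff, Nat.sub_sub]

/-- For `ℓ = k` the quadratic coefficient is the junk value `x / 0 = 0`; the linear one is `1`. -/
theorem choose_le_beyQuadCoeff_add_beyLinCoeff {k ℓ : ℕ} (hℓ : ℓ ≤ k) :
    (k.choose ℓ : ℚ) ≤ beyQuadCoeff k k ℓ + beyLinCoeff k k ℓ := by
  rcases hℓ.lt_or_eq with hℓk | rfl
  · have hpos : ((k - 1).choose ℓ : ℚ) ≠ 0 := by exact_mod_cast (Nat.choose_pos (by omega)).ne'
    have hquad : beyQuadCoeff k k ℓ = k.choose ℓ := by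
      rw [beyQuadCoeff, Nat.cast_mul, mul_div_assoc, div_self hpos, mul_one]
    linarith [beyLinCoeff_nonneg k k ℓ]
  · have hlin : beyLinCoeff ℓ ℓ ℓ = 1 := by simp [beyLinCoeff]
    rw [Nat.choose_self, Nat.cast_one]
    linarith [beyQuadCoeff_nonneg ℓ ℓ ℓ]

theorem beyQuadCoeff_pred_mul_beyQuadCoeff_one {n k ℓ : ℕ} (hℓ : 1 ≤ ℓ) (hℓk : ℓ < k)
    (hkn : k < n) :
    beyQuadCoeff (n - 1) (k - 1) ℓ * beyQuadCoeff n k 1 = (ℓ + 1) * beyQuadCoeff n k (ℓ + 1) := by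
  obtain ⟨j, rfl⟩ : ∃ j, ℓ = j + 1 := ⟨ℓ - 1, by omega⟩
  obtain ⟨a, rfl⟩ : ∃ a, k = j + a + 2 := ⟨k - j - 2, by omega⟩
  obtain ⟨N, rfl⟩ : ∃ N, n = j + a + N + 3 := ⟨n - j - a - 3, by omega⟩
  have h₁ : (j + a + 2) * (j + a + 1).choose (j + 1) =
      (j + a + 2).choose (j + 1 + 1) * (j + 1 + 1) := Nat.add_one_mul_choose_eq _ _
  have h₂ : (j + a + 1) * (j + a).choose (j + 1) =
      (j + a + 1).choose (j + 1 + 1) * (j + 1 + 1) := Nat.add_one_mul_choose_eq _ _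
  have h₃ : (j + a + N + 2) * (j + a + N + 1).choose (j + 1) =
      (j + a + N + 2).choose (j + 1 + 1) * (j + 1 + 1) := Nat.add_one_mul_choose_eq _ _
  have hpos : ((j + a + N + 1).choose (j + 1) : ℚ) ≠ 0 := by
    exact_mod_cast (Nat.choose_pos (by omega)).ne'
  have hpos' : ((j + a + N + 2).choose (j + 1 + 1) : ℚ) ≠ 0 := by
    exact_mod_cast (Nat.choose_pos (by omega)).ne'
  simp only [beyQuadCoeff, Nat.add_one_sub_one, add_tsub_cancel_right, Nat.cast_mul,
    Nat.choose_one_right, Nat.cast_add, Nat.cast_ofNat, Nat.cast_one]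
  field_simp
  qify at h₁ h₂ h₃
  linear_combination
    ((j + a + 1) * (j + a).choose (j + 1) * (j + a + N + 2).choose (j + 1 + 1) : ℚ) * h₁
    + ((j + a + 2).choose (j + 1 + 1) * (j + 2) * (j + a + N + 2).choose (j + 1 + 1) : ℚ) * h₂
    - ((j + 2) * (j + a + 2).choose (j + 1 + 1) * (j + a + 1).choose (j + 1 + 1) : ℚ) * h₃

theorem beyQuadCoeff_pred_mul_beyLinCoeff_one_add {n k ℓ : ℕ} (hℓ : 1 ≤ ℓ) (hℓk : ℓ < k)
    (hkn : k < n) :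
    beyQuadCoeff (n - 1) (k - 1) ℓ * beyLinCoeff n k 1 + beyLinCoeff (n - 1) (k - 1) ℓ * k =
      (ℓ + 1) * beyLinCoeff n k (ℓ + 1) := by
  obtain ⟨j, rfl⟩ : ∃ j, ℓ = j + 1 := ⟨ℓ - 1, by omega⟩
  obtain ⟨a, rfl⟩ : ∃ a, k = j + a + 2 := ⟨k - j - 2, by omega⟩
  obtain ⟨N, rfl⟩ : ∃ N, n = j + a + N + 3 := ⟨n - j - a - 3, by omega⟩
  have hmul : (j + a + N + 1).choose (j + a + 1) * (j + a + 1).choose (j + 1) =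
      (j + a + N + 1).choose (j + 1) * (a + N).choose a := by
    rw [Nat.choose_mul (by omega), show j + a + N + 1 - (j + 1) = a + N by omega,
      show j + a + 1 - (j + 1) = a by omega]
  have hsucc : (j + a).choose (j + 1) * (j + 1) = (j + a).choose j * a := by
    rw [Nat.choose_succ_right_eq, Nat.add_sub_cancel_left]
  have hpascal : (j + a + 1).choose (j + 1) = (j + a).choose j + (j + a).choose (j + 1) :=
    Nat.choose_succ_succ _ _
  have hpos : ((j + a + N + 1).choose (j + 1) : ℚ) ≠ 0 := by
    exact_mod_cast (Nat.choose_pos (by omega)).ne'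
  simp only [beyQuadCoeff, beyLinCoeff, Nat.add_one_sub_one, add_tsub_cancel_right, tsub_self,
    add_tsub_cancel_left, Nat.reduceSubDiff, show j + a + N + 1 - j - 1 = a + N by omega,
    Nat.choose_zero_right, one_mul, Nat.cast_mul, Nat.cast_add, Nat.cast_ofNat, Nat.cast_one]
  rw [div_mul_eq_mul_div, div_add' _ _ _ hpos, div_eq_iff hpos]
  qify at hmul hsucc hpascal
  linear_combination ((j + a).choose (j + 1) : ℚ) * hmul
    - ((j + a + N + 1).choose (j + 1) * (a + N).choose a : ℚ) * hsucc
    - ((j + 2) * (j + a + N + 1).choose (j + 1) * (a + N).choose a : ℚ) * hpascal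

namespace Finset

variable {α : Type*} [DecidableEq α]

def codegree (G : Finset (Finset α)) (H : Finset α) : ℕ := #{E ∈ G | H ⊆ E}

def degree (G : Finset (Finset α)) (v : α) : ℕ := #{E ∈ G | v ∈ E}

theorem codegree_singleton (G : Finset (Finset α)) (v : α) : G.codegree {v} = G.degree v := by
  simp [codegree, degree]

theorem sum_sum_comm_of_subset {M : Type*} [AddCommMonoid M] {G : Finset (Finset α)}
    {V : Finset α} (hGV : ∀ E ∈ G, E ⊆ V) (f : Finset α → α → M) :
    ∑ E ∈ G, ∑ v ∈ E, f E v = ∑ v ∈ V, ∑ E ∈ G with v ∈ E, f E v :=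
  sum_comm' fun E v => by
    simp only [mem_filter]
    exact ⟨fun h => ⟨h, hGV E h.1 h.2⟩, fun h => h.1⟩

theorem sum_sum_eq_sum_degree_smul {M : Type*} [AddCommMonoid M] {G : Finset (Finset α)}
    {V : Finset α} (hGV : ∀ E ∈ G, E ⊆ V) (f : α → M) :
    ∑ E ∈ G, ∑ v ∈ E, f v = ∑ v ∈ V, G.degree v • f v := by
  simp only [sum_sum_comm_of_subset hGV, sum_const, degree]

theorem sum_degree {G : Finset (Finset α)} {V : Finset α} {k : ℕ}
    (hG : G ⊆ V.powersetCard k) : ∑ v ∈ V, G.degree v = k * #G := by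
  have h := sum_sum_eq_sum_degree_smul (fun E hE => (mem_powersetCard.1 (hG hE)).1) fun _ => 1
  simp only [sum_const, smul_eq_mul, mul_one] at h
  rw [← h, sum_congr rfl fun E hE => (mem_powersetCard.1 (hG hE)).2, sum_const, smul_eq_mul,
    mul_comm]

theorem sum_powersetCard_succ_smul {M : Type*} [AddCommMonoid M] (V : Finset α) (ℓ : ℕ)
    (f : Finset α → M) :
    (ℓ + 1) • ∑ H ∈ V.powersetCard (ℓ + 1), f H =
      ∑ x ∈ V, ∑ H ∈ (V.erase x).powersetCard ℓ, f (insert x H) := by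
  have hsub : ∀ H ∈ V.powersetCard (ℓ + 1), H ⊆ V := fun H hH => (mem_powersetCard.1 hH).1
  calc (ℓ + 1) • ∑ H ∈ V.powersetCard (ℓ + 1), f H
      = ∑ H ∈ V.powersetCard (ℓ + 1), ∑ _x ∈ H, f H := by
        rw [smul_sum]
        exact sum_congr rfl fun H hH => by rw [sum_const, (mem_powersetCard.1 hH).2]
    _ = ∑ x ∈ V, ∑ H ∈ V.powersetCard (ℓ + 1) with x ∈ H, f H := sum_sum_comm_of_subset hsub _
    _ = _ := by
      refine sum_congr rfl fun x hx => ?_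
      refine sum_nbij' (·.erase x) (insert x) ?_ ?_ ?_ ?_ ?_
      · intro H hH
        simp only [mem_filter, mem_powersetCard] at hH ⊢
        exact ⟨erase_subset_erase x hH.1.1, by rw [card_erase_of_mem hH.2, hH.1.2]; rfl⟩
      · intro H hH
        simp only [mem_filter, mem_powersetCard] at hH ⊢
        have hxH : x ∉ H := fun h => (mem_erase.1 (hH.1 h)).1 rfl
        refine ⟨⟨insert_subset hx (hH.1.trans (erase_subset x V)), ?_⟩, mem_insert_self x H⟩
        rw [card_insert_of_notMem hxH, hH.2]
      · intro H hH
        exact insert_erase (mem_filter.1 hH).2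
      · intro H hH
        exact erase_insert fun h => (mem_erase.1 ((mem_powersetCard.1 hH).1 h)).1 rfl
      · intro H hH
        rw [insert_erase (mem_filter.1 hH).2]

theorem card_memberSubfamily (G : Finset (Finset α)) (x : α) :
    #(G.memberSubfamily x) = G.degree x :=
  card_image_of_injOn ((erase_injOn' x).mono fun _ hE => (mem_filter.1 hE).2)

theorem memberSubfamily_subset_powersetCard {G : Finset (Finset α)} {V : Finset α} {k : ℕ}
    (hG : G ⊆ V.powersetCard k) (x : α) :
    G.memberSubfamily x ⊆ (V.erase x).powersetCard (k - 1) := by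
  intro E hE
  obtain ⟨hxE, hx⟩ := mem_memberSubfamily.1 hE
  obtain ⟨hsub, hcard⟩ := mem_powersetCard.1 (hG hxE)
  rw [card_insert_of_notMem hx] at hcard
  exact mem_powersetCard.2 ⟨subset_erase.2 ⟨(subset_insert x E).trans hsub, hx⟩, by omega⟩

theorem codegree_memberSubfamily (G : Finset (Finset α)) {x : α} {H : Finset α} (hx : x ∉ H) :
    (G.memberSubfamily x).codegree H = G.codegree (insert x H) := by
  refine card_nbij' (insert x) (·.erase x) ?_ ?_ ?_ ?_
  · intro E hE
    simp only [coe_filter, mem_memberSubfamily, Set.mem_ofPred_eq] at hE ⊢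
    exact ⟨hE.1.1, insert_subset_insert x hE.2⟩
  · intro E hE
    simp only [coe_filter, mem_memberSubfamily, Set.mem_ofPred_eq, insert_subset_iff] at hE ⊢
    refine ⟨⟨by rw [insert_erase hE.2.1]; exact hE.1, notMem_erase x E⟩,
      subset_erase.2 ⟨hE.2.2, hx⟩⟩
  · intro E hE
    exact erase_insert (mem_memberSubfamily.1 (mem_filter.1 hE).1).2
  · intro E hE
    exact insert_erase ((insert_subset_iff.1 (mem_filter.1 hE).2).1)

theorem card_filter_mem_and_mem_powersetCard {V : Finset α} {k : ℕ} (hk : 2 ≤ k) {v u : α}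
    (hv : v ∈ V) (hu : u ∈ V) :
    #{E ∈ V.powersetCard k | v ∈ E ∧ u ∈ E} =
      if v = u then (#V - 1).choose (k - 1) else (#V - 2).choose (k - 2) := by
  have hpair : ({v, u} : Finset α) ⊆ V := insert_subset hv (singleton_subset_iff.2 hu)
  have h := card_filter_powersetCard_subset _ _ k hpair
  simp only [insert_subset_iff, singleton_subset_iff] at h
  split_ifs with hvu
  · subst hvu
    simpa using h (by simp only [mem_singleton, insert_eq_of_mem, card_singleton]; omega)
  · rw [card_pair hvu] at h
    exact h hk

theorem sum_powersetCard_sum_sq {R : Type*} [CommSemiring R] {V : Finset α} {k : ℕ}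
    (hk : 2 ≤ k) (hV : 2 ≤ #V) (w : α → R) :
    ∑ E ∈ V.powersetCard k, (∑ v ∈ E, w v) ^ 2 =
      (#V - 2).choose (k - 1) * ∑ v ∈ V, w v ^ 2
        + (#V - 2).choose (k - 2) * (∑ v ∈ V, w v) ^ 2 := by
  have hsub : ∀ E ∈ V.powersetCard k, E ⊆ V := fun E hE => (mem_powersetCard.1 hE).1
  have hpascal : (#V - 1).choose (k - 1) = (#V - 2).choose (k - 2) + (#V - 2).choose (k - 1) := by
    obtain ⟨n, hn⟩ : ∃ n, #V = n + 2 := ⟨#V - 2, by omega⟩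
    obtain ⟨j, rfl⟩ : ∃ j, k = j + 2 := ⟨k - 2, by omega⟩
    simp [hn, Nat.choose_succ_succ]
  have hpairs (v u : α) (hv : v ∈ V) (hu : u ∈ V) :
      #{E ∈ V.powersetCard k | v ∈ E ∧ u ∈ E} =
        (#V - 2).choose (k - 2) + if v = u then (#V - 2).choose (k - 1) else 0 := by
    rw [card_filter_mem_and_mem_powersetCard hk hv hu, hpascal]
    split_ifs <;> simp
  calc ∑ E ∈ V.powersetCard k, (∑ v ∈ E, w v) ^ 2
      = ∑ E ∈ V.powersetCard k, ∑ v ∈ E, ∑ u ∈ E, w v * w u := by simp only [sq, sum_mul_sum]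
    _ = ∑ v ∈ V, ∑ u ∈ V, #{E ∈ V.powersetCard k | v ∈ E ∧ u ∈ E} • (w v * w u) := by
      rw [sum_sum_comm_of_subset hsub]
      refine sum_congr rfl fun v _ => ?_
      rw [sum_sum_comm_of_subset fun E hE => hsub E (mem_filter.1 hE).1]
      simp only [sum_const, filter_filter]
    _ = _ := by
      rw [sum_congr rfl fun v hv => sum_congr rfl fun u hu => by rw [hpairs v u hv hu]]
      simp only [nsmul_eq_mul, Nat.cast_add, Nat.cast_ite, Nat.cast_zero, add_mul, ite_mul,
        zero_mul, sum_add_distrib, sum_ite_eq, ← mul_sum, ← sum_mul, sq]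
      rw [sum_ite_mem, inter_self, ← mul_sum, add_comm]

theorem two_mul_mul_sum_le {ι R : Type*} [CommRing R] [LinearOrder R] [IsStrictOrderedRing R]
    {s t : Finset ι} (hst : s ⊆ t) (a : R) (f : ι → R) :
    2 * a * ∑ i ∈ s, f i ≤ #s * a ^ 2 + ∑ i ∈ t, f i ^ 2 :=
  calc 2 * a * ∑ i ∈ s, f i
      ≤ ∑ i ∈ s, (a ^ 2 + f i ^ 2) := by
        rw [mul_sum]; exact sum_le_sum fun i _ => two_mul_le_add_sq a (f i)
    _ = #s * a ^ 2 + ∑ i ∈ s, f i ^ 2 := by rw [sum_add_distrib, sum_const, nsmul_eq_mul]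
    _ ≤ #s * a ^ 2 + ∑ i ∈ t, f i ^ 2 := by gcongr

theorem mul_sum_degree_sq_le {G : Finset (Finset α)} {V : Finset α} {k : ℕ}
    (hG : G ⊆ V.powersetCard k) (hk : 2 ≤ k) (hV : 2 ≤ #V) (c : ℚ) :
    (#V - 2).choose (k - 1) * ∑ v ∈ V, (G.degree v : ℚ) ^ 2 ≤
      ((#V - 2).choose (k - 1)) ^ 2 * #G + (#V - 2).choose (k - 1) * (#V * c ^ 2)
        + (#V - 2).choose (k - 2) * (k * #G - #V * c) ^ 2 := by
  have h := two_mul_mul_sum_le hG ((#V - 2).choose (k - 1) : ℚ)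
    fun E => ∑ v ∈ E, ((G.degree v : ℚ) - c)
  rw [sum_powersetCard_sum_sq hk hV,
    sum_sum_eq_sum_degree_smul (fun E hE => (mem_powersetCard.1 (hG hE)).1)] at h
  have hdeg : ∑ v ∈ V, (G.degree v : ℚ) = k * #G := by exact_mod_cast sum_degree hG
  simp only [nsmul_eq_mul, mul_sub, sub_sq, sum_sub_distrib, sum_add_distrib, ← sum_mul,
    ← mul_sum, sum_const, hdeg, ← sq] at h
  linear_combination h

theorem sum_degree_sq_le {G : Finset (Finset α)} {V : Finset α} {k : ℕ}
    (hG : G ⊆ V.powersetCard k) (hk : 2 ≤ k) (hkV : k < #V) :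
    ∑ v ∈ V, (G.degree v : ℚ) ^ 2 ≤
      k * (k - 1) / (#V - 1) * #G ^ 2 + (#V - 2).choose (k - 1) * #G := by
  have hA : (0 : ℚ) < (#V - 2).choose (k - 1) := by
    exact_mod_cast Nat.choose_pos (by omega)
  have hBA : ((#V - 2).choose (k - 2) : ℚ) * (#V - k) = (k - 1) * (#V - 2).choose (k - 1) := by
    have h := Nat.choose_succ_right_eq (#V - 2) (k - 2)
    rw [show k - 2 + 1 = k - 1 by omega, show #V - 2 - (k - 2) = #V - k by omega] at h
    rw [← Nat.cast_sub hkV.le, ← Nat.cast_pred (by omega)]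
    exact_mod_cast h.symm.trans (mul_comm _ _)
  have hV : (#V : ℚ) - 1 ≠ 0 := sub_ne_zero.2 (by exact_mod_cast (by omega : #V ≠ 1))
  -- this `c` minimises the right-hand side of `mul_sum_degree_sq_le`
  have h := mul_sum_degree_sq_le hG hk (by omega) ((k - 1) * #G / (#V - 1))
  refine le_of_mul_le_mul_left (h.trans_eq ?_) hA
  field_simp
  linear_combination (#G ^ 2 * (#V - k) : ℚ) * hBA

theorem sum_degree_sq_le_card {G : Finset (Finset α)} {V : Finset α}
    (hG : G ⊆ V.powersetCard 1) : ∑ v ∈ V, G.degree v ^ 2 ≤ #G := by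
  have hdeg (v : α) : G.degree v ≤ 1 := by
    refine card_le_one.2 fun E hE E' hE' => ?_
    obtain ⟨hE, hvE⟩ := mem_filter.1 hE
    obtain ⟨hE', hvE'⟩ := mem_filter.1 hE'
    obtain ⟨a, rfl⟩ := card_eq_one.1 (mem_powersetCard.1 (hG hE)).2
    obtain ⟨b, rfl⟩ := card_eq_one.1 (mem_powersetCard.1 (hG hE')).2
    rw [← mem_singleton.1 hvE, ← mem_singleton.1 hvE']
  calc ∑ v ∈ V, G.degree v ^ 2 ≤ ∑ v ∈ V, G.degree v :=
        sum_le_sum fun v _ => by nlinarith [hdeg v]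
    _ = #G := by rw [sum_degree hG, one_mul]

theorem sum_degree_sq_le_beyCoeff {G : Finset (Finset α)} {V : Finset α} {k : ℕ}
    (hG : G ⊆ V.powersetCard k) (hk : 1 ≤ k) (hkV : k < #V) :
    ∑ v ∈ V, (G.degree v : ℚ) ^ 2 ≤ beyQuadCoeff #V k 1 * #G ^ 2 + beyLinCoeff #V k 1 * #G := by
  rw [beyQuadCoeff_one (by omega), beyLinCoeff_one]
  rcases hk.eq_or_lt with rfl | hk
  · have h : ∑ v ∈ V, (G.degree v : ℚ) ^ 2 ≤ #G := by exact_mod_cast sum_degree_sq_le_card hG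
    simpa using h
  · exact sum_degree_sq_le hG hk hkV

theorem sum_codegree_sq_le_of_card_le {G : Finset (Finset α)} {V : Finset α} {k ℓ : ℕ}
    (hG : G ⊆ V.powersetCard k) (hV : #V ≤ k) (hℓ : ℓ ≤ k) :
    ∑ H ∈ V.powersetCard ℓ, (G.codegree H : ℚ) ^ 2 ≤
      beyQuadCoeff #V k ℓ * #G ^ 2 + beyLinCoeff #V k ℓ * #G := by
  have hGV : G ⊆ {V} := fun E hE => by
    obtain ⟨hEV, hE⟩ := mem_powersetCard.1 (hG hE)
    exact mem_singleton.2 (eq_of_subset_of_card_le hEV (hE ▸ hV))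
  rcases subset_singleton_iff.1 hGV with rfl | rfl
  · simp [codegree]
  · obtain rfl : #V = k := (mem_powersetCard.1 (hG (mem_singleton_self V))).2
    have hcodeg : ∀ H ∈ V.powersetCard ℓ, ({V} : Finset (Finset α)).codegree H = 1 :=
      fun H hH => by
        rw [codegree, filter_singleton, if_pos (mem_powersetCard.1 hH).1, card_singleton]
    rw [sum_congr rfl fun H hH => by rw [hcodeg H hH]]
    simpa using choose_le_beyQuadCoeff_add_beyLinCoeff hℓ

theorem sum_codegree_sq_le_succ {G : Finset (Finset α)} {V : Finset α} {k ℓ : ℕ}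
    (hG : G ⊆ V.powersetCard k) (hℓ : 1 ≤ ℓ) (hℓk : ℓ < k) (hkV : k < #V)
    (ih : ∀ x ∈ V, ∑ H ∈ (V.erase x).powersetCard ℓ, ((G.memberSubfamily x).codegree H : ℚ) ^ 2
      ≤ beyQuadCoeff (#V - 1) (k - 1) ℓ * G.degree x ^ 2
        + beyLinCoeff (#V - 1) (k - 1) ℓ * G.degree x) :
    ∑ H ∈ V.powersetCard (ℓ + 1), (G.codegree H : ℚ) ^ 2 ≤
      beyQuadCoeff #V k (ℓ + 1) * #G ^ 2 + beyLinCoeff #V k (ℓ + 1) * #G := by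
  have hdeg : ∑ v ∈ V, (G.degree v : ℚ) = k * #G := by exact_mod_cast sum_degree hG
  refine le_of_mul_le_mul_left ?_ (by positivity : (0 : ℚ) < ℓ + 1)
  calc (ℓ + 1) * ∑ H ∈ V.powersetCard (ℓ + 1), (G.codegree H : ℚ) ^ 2
      = ∑ x ∈ V, ∑ H ∈ (V.erase x).powersetCard ℓ, ((G.memberSubfamily x).codegree H : ℚ) ^ 2 := by
        rw [← Nat.cast_add_one, ← nsmul_eq_mul, sum_powersetCard_succ_smul]
        refine sum_congr rfl fun x _ => sum_congr rfl fun H hH => ?_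
        rw [codegree_memberSubfamily G fun h => (mem_erase.1 ((mem_powersetCard.1 hH).1 h)).1 rfl]
    _ ≤ ∑ x ∈ V, (beyQuadCoeff (#V - 1) (k - 1) ℓ * G.degree x ^ 2
          + beyLinCoeff (#V - 1) (k - 1) ℓ * G.degree x) := sum_le_sum ih
    _ = beyQuadCoeff (#V - 1) (k - 1) ℓ * ∑ v ∈ V, (G.degree v : ℚ) ^ 2
          + beyLinCoeff (#V - 1) (k - 1) ℓ * (k * #G) := by
        rw [sum_add_distrib, ← mul_sum, ← mul_sum, hdeg]
    _ ≤ beyQuadCoeff (#V - 1) (k - 1) ℓ * (beyQuadCoeff #V k 1 * #G ^ 2 + beyLinCoeff #V k 1 * #G)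
          + beyLinCoeff (#V - 1) (k - 1) ℓ * (k * #G) := by
        gcongr
        · exact beyQuadCoeff_nonneg _ _ _
        · exact sum_degree_sq_le_beyCoeff hG (by omega) hkV
    _ = (ℓ + 1) * (beyQuadCoeff #V k (ℓ + 1) * #G ^ 2 + beyLinCoeff #V k (ℓ + 1) * #G) := by
        linear_combination (#G ^ 2 : ℚ) * beyQuadCoeff_pred_mul_beyQuadCoeff_one hℓ hℓk hkV
          + (#G : ℚ) * beyQuadCoeff_pred_mul_beyLinCoeff_one_add hℓ hℓk hkV

theorem sum_codegree_sq_le {G : Finset (Finset α)} {V : Finset α} {k ℓ : ℕ}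
    (hG : G ⊆ V.powersetCard k) (hℓ : ℓ ≤ k) :
    ∑ H ∈ V.powersetCard ℓ, (G.codegree H : ℚ) ^ 2 ≤
      beyQuadCoeff #V k ℓ * #G ^ 2 + beyLinCoeff #V k ℓ * #G := by
  induction ℓ generalizing k V G with
  | zero =>
    simp only [powersetCard_zero, sum_singleton, codegree, empty_subset, filter_true_of_mem,
      beyQuadCoeff_zero, one_mul, le_add_iff_nonneg_right, implies_true]
    exact mul_nonneg (beyLinCoeff_nonneg _ _ _) (Nat.cast_nonneg _)
  | succ ℓ ih =>
    rcases le_or_gt #V k with hV | hkV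
    · exact sum_codegree_sq_le_of_card_le hG hV hℓ
    rcases Nat.eq_zero_or_pos ℓ with rfl | hℓ₀
    · simpa [powersetCard_one, codegree_singleton] using
        sum_degree_sq_le_beyCoeff hG (by omega) hkV
    refine sum_codegree_sq_le_succ hG hℓ₀ (by omega) hkV fun x hx => ?_
    have h := ih (memberSubfamily_subset_powersetCard hG x) (by omega)
    rwa [card_erase_of_mem hx, card_memberSubfamily] at h

end Finset

/-- Bey's inequality: for a `k`-uniform hypergraph `G` on `n` vertices and `0 ≤ ℓ ≤ k`,
the sum over `ℓ`-sets `H` of `d(H)²` is at most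
`(C(k,ℓ)·C(k-1,ℓ)/C(n-1,ℓ))·|G|² + C(k-1,ℓ-1)·C(n-ℓ-1,k-ℓ)·|G|`. -/
theorem bey_inequality (n k ℓ : ℕ) (hℓ : ℓ ≤ k)
    (G : Finset (Finset (Fin n))) (hG : ∀ E ∈ G, E.card = k) :
    ∑ H ∈ Finset.univ.powersetCard ℓ,
        (((G.filter fun E => H ⊆ E).card : ℚ)) ^ 2 ≤
      ((k.choose ℓ * (k - 1).choose ℓ : ℕ) : ℚ) / (((n - 1).choose ℓ : ℕ) : ℚ)
          * (G.card : ℚ) ^ 2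
        + (((k - 1).choose (ℓ - 1) * (n - ℓ - 1).choose (k - ℓ) : ℕ) : ℚ) * (G.card : ℚ) := by
  have h := sum_codegree_sq_le (V := univ) (fun E hE => mem_powersetCard_univ.2 (hG E hE)) hℓ
  rw [card_univ, Fintype.card_fin] at h
  exact h
end

section
/- For any k-uniform hypergraph G on vertex set [n], the sum over all (k-1)-element subsets H of [n] of d(H)² is at most (k/C(n-1,k-1))·|E(G)|² + (k-1)(n-k)·|E(G)|. -/
/-!
Let `D` send a function on `(r+1)`-sets to the function on `r`-sets summing it over supersets,
and `U` (its adjoint) send a function on `(r+1)`-sets to the function on `(r+2)`-sets summing it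
over subsets. Counting common supersets and common subsets of two `(r+1)`-sets gives
`‖U y‖² = ‖D y‖² + (n - 2(r+1))‖y‖²`. By induction on `r` this yields
`‖D z‖² ≤ r(n-r-1)‖z‖²` for every `z` of mean zero: with `y = D z`, the induction hypothesis bounds
`‖U y‖²`, and Cauchy–Schwarz in `‖y‖² = ⟨U y, z⟩` transfers the bound to `‖y‖²`.
Applying this to `x` minus its mean, where `x` is any function on `k`-sets (the indicator of the
hypergraph), the mean contributes exactly `k / C(n-1,k-1) · (∑ x)²`.
-/

open Finset

section Counting

variable {α : Type*} [Fintype α] [DecidableEq α]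

lemma filter_subset_powersetCard_univ (E : Finset α) (r : ℕ) :
    {H ∈ powersetCard r (univ : Finset α) | H ⊆ E} = powersetCard r E := by
  ext H
  simp [and_comm]

lemma card_filter_superset_powersetCard_univ {B : Finset α} {r : ℕ} (hB : #B ≤ r) :
    #{F ∈ powersetCard r univ | B ⊆ F} = (Fintype.card α - #B).choose (r - #B) := by
  simpa using card_filter_powersetCard_subset B univ r (subset_univ B) hB

lemma card_filter_union_subset_eq_card_filter_subset_inter {H H' : Finset α} {r : ℕ}
    (hH : #H = r + 1) (hH' : #H' = r + 1) (hne : H ≠ H') :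
    #{F ∈ powersetCard (r + 2) univ | H ∪ H' ⊆ F} =
      #{G ∈ powersetCard r univ | G ⊆ H ∩ H'} := by
  have hcard : #(H ∩ H') + #(H ∪ H') = 2 * (r + 1) := by
    rw [card_inter_add_card_union, hH, hH']; ring
  have hlt : r + 1 < #(H ∪ H') := by
    refine hH ▸ card_lt_card (Finset.ssubset_iff_subset_ne.2 ⟨subset_union_left, fun h => ?_⟩)
    exact hne (eq_of_subset_of_card_le (h ▸ subset_union_right) (by omega)).symm
  rw [filter_subset_powersetCard_univ, card_powersetCard]
  rcases eq_or_lt_of_le (Nat.succ_le_of_lt hlt) with hU | hU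
  · rw [card_filter_superset_powersetCard_univ hU.ge, ← hU, Nat.sub_self, Nat.choose_zero_right,
      show #(H ∩ H') = r by omega, Nat.choose_self]
  · rw [Nat.choose_eq_zero_of_lt (show #(H ∩ H') < r by omega), card_eq_zero,
      filter_eq_empty_iff]
    intro F hF hsub
    have := card_le_card hsub
    rw [(mem_powersetCard.1 hF).2] at this
    omega

lemma card_common_supersets_eq_card_common_subsets_add {R : Type*} [CommRing R]
    {H H' : Finset α} {r : ℕ} (hH : #H = r + 1) (hH' : #H' = r + 1) :
    (#{F ∈ powersetCard (r + 2) univ | H ⊆ F ∧ H' ⊆ F} : R) =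
      #{G ∈ powersetCard r univ | G ⊆ H ∧ G ⊆ H'} +
        if H = H' then (Fintype.card α : R) - 2 * (r + 1) else 0 := by
  simp only [← union_subset_iff, ← subset_inter_iff]
  split_ifs with h
  · subst h
    have hn : r + 1 ≤ Fintype.card α := hH ▸ card_le_univ H
    rw [union_self, inter_self, card_filter_superset_powersetCard_univ (by omega),
      filter_subset_powersetCard_univ, card_powersetCard, hH, Nat.choose_succ_self_right,
      show r + 2 - (r + 1) = 1 by omega, Nat.choose_one_right, Nat.cast_sub hn]
    push_cast
    ring
  · rw [card_filter_union_subset_eq_card_filter_subset_inter hH hH' h, add_zero]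

end Counting

section Sums

variable {ι κ R : Type*} (s : Finset ι) (t : Finset κ) (p : ι → κ → Prop)
  [∀ a b, Decidable (p a b)]

lemma sum_mul_sum_filter_eq_sum_sum_filter_mul [NonUnitalNonAssocSemiring R] (f : ι → R)
    (g : κ → R) :
    ∑ a ∈ s, f a * ∑ b ∈ t with p a b, g b = ∑ b ∈ t, (∑ a ∈ s with p a b, f a) * g b := by
  simp only [sum_filter, mul_sum, sum_mul, mul_ite, ite_mul, mul_zero, zero_mul]
  exact sum_comm

lemma sum_sq_sum_filter [CommSemiring R] (y : ι → R) :
    ∑ b ∈ t, (∑ a ∈ s with p a b, y a) ^ 2 =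
      ∑ a ∈ s, ∑ a' ∈ s, y a * y a' * #{b ∈ t | p a b ∧ p a' b} := by
  simp only [sq, sum_filter, sum_mul_sum, ite_mul, mul_ite, mul_zero, zero_mul, ← ite_and]
  rw [sum_comm]
  refine sum_congr rfl fun a _ => ?_
  rw [sum_comm]
  refine sum_congr rfl fun a' _ => ?_
  rw [← sum_filter, sum_const, nsmul_eq_mul, mul_comm, filter_congr fun _ _ => and_comm]

end Sums

section Shadows

variable {α 𝕜 : Type*} [Fintype α] [DecidableEq α]

def sumSupersets [AddCommMonoid 𝕜] (r : ℕ) (f : Finset α → 𝕜) (H : Finset α) : 𝕜 :=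
  ∑ E ∈ powersetCard r univ with H ⊆ E, f E

def sumSubsets [AddCommMonoid 𝕜] (r : ℕ) (f : Finset α → 𝕜) (F : Finset α) : 𝕜 :=
  ∑ H ∈ powersetCard r univ with H ⊆ F, f H

lemma sum_mul_sumSupersets [CommSemiring 𝕜] (r s : ℕ) (f g : Finset α → 𝕜) :
    ∑ H ∈ powersetCard r univ, f H * sumSupersets s g H =
      ∑ E ∈ powersetCard s univ, sumSubsets r f E * g E :=
  sum_mul_sum_filter_eq_sum_sum_filter_mul _ _ _ f g

lemma sum_sumSupersets [CommSemiring 𝕜] (r : ℕ) (g : Finset α → 𝕜) :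
    ∑ H ∈ powersetCard r univ, sumSupersets (r + 1) g H =
      (r + 1) * ∑ E ∈ powersetCard (r + 1) univ, g E := by
  have h := sum_mul_sumSupersets r (r + 1) (fun _ => (1 : 𝕜)) g
  simp only [one_mul] at h
  rw [h, mul_sum]
  refine sum_congr rfl fun E hE => ?_
  rw [sumSubsets, sum_const, filter_subset_powersetCard_univ, card_powersetCard,
    (mem_powersetCard.1 hE).2, Nat.choose_succ_self_right, nsmul_one]
  push_cast
  ring

lemma sum_sq_sumSubsets [CommRing 𝕜] (r : ℕ) (y : Finset α → 𝕜) :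
    ∑ F ∈ powersetCard (r + 2) univ, sumSubsets (r + 1) y F ^ 2 =
      ∑ G ∈ powersetCard r univ, sumSupersets (r + 1) y G ^ 2 +
        ((Fintype.card α : 𝕜) - 2 * (r + 1)) * ∑ H ∈ powersetCard (r + 1) univ, y H ^ 2 := by
  simp only [sumSubsets, sumSupersets, sum_sq_sum_filter, mul_sum]
  rw [← sum_add_distrib]
  refine sum_congr rfl fun H hH => ?_
  have hHcard := (mem_powersetCard.1 hH).2
  have hdiag : ((Fintype.card α : 𝕜) - 2 * (r + 1)) * y H ^ 2 =
      ∑ H' ∈ powersetCard (r + 1) univ,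
        if H = H' then y H * y H' * ((Fintype.card α : 𝕜) - 2 * (r + 1)) else 0 := by
    rw [sum_ite_eq, if_pos hH]
    ring
  rw [hdiag, ← sum_add_distrib]
  refine sum_congr rfl fun H' hH' => ?_
  rw [card_common_supersets_eq_card_common_subsets_add hHcard (mem_powersetCard.1 hH').2]
  split_ifs with h
  · subst h; ring
  · ring

lemma sumSupersets_add_const [CommSemiring 𝕜] (j : ℕ) (z : Finset α → 𝕜) (t : 𝕜) {H : Finset α}
    (hH : #H = j) :
    sumSupersets (j + 1) (fun E => z E + t) H =
      sumSupersets (j + 1) z H + (Fintype.card α - j : ℕ) * t := by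
  have hdeg : #{E ∈ powersetCard (j + 1) univ | H ⊆ E} = Fintype.card α - j := by
    rw [card_filter_superset_powersetCard_univ (by omega), hH, Nat.add_sub_cancel_left,
      Nat.choose_one_right]
  simp only [sumSupersets, sum_add_distrib, sum_const, hdeg, nsmul_eq_mul]

lemma sum_sq_sumSupersets_add_const [CommSemiring 𝕜] (j : ℕ) (z : Finset α → 𝕜)
    (hz : ∑ E ∈ powersetCard (j + 1) univ, z E = 0) (t : 𝕜) :
    ∑ H ∈ powersetCard j univ, sumSupersets (j + 1) (fun E => z E + t) H ^ 2 =
      ∑ H ∈ powersetCard j univ, sumSupersets (j + 1) z H ^ 2 +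
        (Fintype.card α).choose j * ((Fintype.card α - j : ℕ) * t) ^ 2 := by
  rw [sum_congr rfl fun H hH => by rw [sumSupersets_add_const j z t (mem_powersetCard.1 hH).2]]
  simp only [add_sq, sum_add_distrib, ← sum_mul, ← mul_sum, sum_sumSupersets, hz, mul_zero,
    zero_mul, add_zero, sum_const, card_powersetCard, card_univ, nsmul_eq_mul]

end Shadows

lemma le_mul_sum_sq_of_eq_sum_mul {ι 𝕜 : Type*} [CommRing 𝕜] [LinearOrder 𝕜]
    [IsStrictOrderedRing 𝕜] (s : Finset ι) (u z : ι → 𝕜) {q c : 𝕜}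
    (hq : q = ∑ i ∈ s, u i * z i) (hc : 0 ≤ c) (hu : ∑ i ∈ s, u i ^ 2 ≤ c * q) :
    q ≤ c * ∑ i ∈ s, z i ^ 2 := by
  have hCS := sum_mul_sq_le_sq_mul_sq s u z
  rw [← hq] at hCS
  have hz : 0 ≤ ∑ i ∈ s, z i ^ 2 := sum_nonneg fun _ _ => sq_nonneg _
  nlinarith [mul_le_mul_of_nonneg_right hu hz, mul_nonneg hc hz]

section Bey

variable {α 𝕜 : Type*} [Fintype α] [DecidableEq α]

theorem sum_sq_sumSupersets_le_of_sum_eq_zero [CommRing 𝕜] [LinearOrder 𝕜]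
    [IsStrictOrderedRing 𝕜] (r : ℕ) (z : Finset α → 𝕜)
    (hz : ∑ E ∈ powersetCard (r + 1) univ, z E = 0) :
    ∑ H ∈ powersetCard r univ, sumSupersets (r + 1) z H ^ 2 ≤
      r * (Fintype.card α - (r + 1) : ℕ) * ∑ E ∈ powersetCard (r + 1) univ, z E ^ 2 := by
  induction r generalizing z with
  | zero => simp [sumSupersets, hz]
  | succ r ih =>
    set n := Fintype.card α
    set y := sumSupersets (r + 2) z
    have hy : ∑ H ∈ powersetCard (r + 1) univ, y H = 0 := by
      rw [sum_sumSupersets, hz, mul_zero]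
    have hcoef :
        (r : 𝕜) * (n - (r + 1) : ℕ) + (n - 2 * (r + 1)) ≤ (r + 1 : ℕ) * (n - (r + 2) : ℕ) := by
      rcases le_or_gt (r + 2) n with hn | hn
      · rw [Nat.cast_sub hn, Nat.cast_sub (by omega)]
        push_cast
        linarith
      · rw [Nat.sub_eq_zero_of_le hn.le, show n - (r + 1) = 0 by omega]
        have : (n : 𝕜) ≤ r + 1 := by exact_mod_cast Nat.lt_succ_iff.1 hn
        push_cast
        linarith
    have hUy : ∑ F ∈ powersetCard (r + 2) univ, sumSubsets (r + 1) y F ^ 2 ≤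
        (r + 1 : ℕ) * (n - (r + 2) : ℕ) * ∑ H ∈ powersetCard (r + 1) univ, y H ^ 2 := by
      have hQ : 0 ≤ ∑ H ∈ powersetCard (r + 1) univ, y H ^ 2 :=
        sum_nonneg fun _ _ => sq_nonneg _
      rw [sum_sq_sumSubsets]
      nlinarith [ih y hy, mul_le_mul_of_nonneg_right hcoef hQ]
    refine le_mul_sum_sq_of_eq_sum_mul _ _ _ ?_ (by positivity) hUy
    simp only [sq]
    exact sum_mul_sumSupersets _ _ _ _

lemma add_one_div_choose_sub_one [Field 𝕜] [CharZero 𝕜] {n j : ℕ} (hn : j + 1 ≤ n) :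
    (j + 1 : 𝕜) / ((n - 1).choose j : ℕ) = n / (n.choose (j + 1) : ℕ) := by
  have hC : (((n - 1).choose j : ℕ) : 𝕜) ≠ 0 :=
    Nat.cast_ne_zero.2 (Nat.choose_pos (by omega)).ne'
  have hN : ((n.choose (j + 1) : ℕ) : 𝕜) ≠ 0 := Nat.cast_ne_zero.2 (Nat.choose_pos hn).ne'
  have h := Nat.add_one_mul_choose_eq (n - 1) j
  rw [Nat.sub_add_cancel (by omega)] at h
  rw [div_eq_div_iff hC hN]
  exact_mod_cast (mul_comm _ _).trans h.symm

theorem sum_sq_sumSupersets_le [Field 𝕜] [LinearOrder 𝕜] [IsStrictOrderedRing 𝕜] (j : ℕ)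
    (x : Finset α → 𝕜) :
    ∑ H ∈ powersetCard j univ, sumSupersets (j + 1) x H ^ 2 ≤
      (j + 1) / ((Fintype.card α - 1).choose j : ℕ) *
          (∑ E ∈ powersetCard (j + 1) univ, x E) ^ 2 +
        j * (Fintype.card α - (j + 1) : ℕ) * ∑ E ∈ powersetCard (j + 1) univ, x E ^ 2 := by
  set n := Fintype.card α
  rcases lt_or_ge n (j + 1) with hn | hn
  · have hempty : powersetCard (j + 1) (univ : Finset α) = ∅ :=
      powersetCard_eq_empty.2 (by rwa [card_univ])
    simp [sumSupersets, hempty]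
  set N : ℕ := n.choose (j + 1)
  have hN : (N : 𝕜) ≠ 0 := by have := Nat.choose_pos hn; positivity
  obtain ⟨t, hs⟩ : ∃ t : 𝕜, ∑ E ∈ powersetCard (j + 1) univ, x E = N * t :=
    ⟨_ / N, (mul_div_cancel₀ _ hN).symm⟩
  set z : Finset α → 𝕜 := fun E => x E - t
  have hcardN : #(powersetCard (j + 1) (univ : Finset α)) = N := by simp [N, n]
  have hz : ∑ E ∈ powersetCard (j + 1) univ, z E = 0 := by
    simp only [z, sum_sub_distrib, sum_const, hcardN, nsmul_eq_mul, hs, sub_self]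
  have hz2 : ∑ E ∈ powersetCard (j + 1) univ, z E ^ 2 =
      ∑ E ∈ powersetCard (j + 1) univ, x E ^ 2 - N * t ^ 2 := by
    simp only [z, sub_sq, sum_add_distrib, sum_sub_distrib, ← sum_mul, ← mul_sum, sum_const,
      hcardN, nsmul_eq_mul, hs]
    ring
  have hchoose₁ : ((n - j : ℕ) : 𝕜) * n.choose j = (j + 1) * N := by
    exact_mod_cast show (n - j) * n.choose j = (j + 1) * N by
      rw [mul_comm, ← Nat.choose_succ_right_eq, mul_comm]
  have hratio : (j + 1 : 𝕜) / ((n - 1).choose j : ℕ) * (N * t) ^ 2 = n * N * t ^ 2 := by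
    rw [add_one_div_choose_sub_one hn, div_mul_eq_mul_div]
    exact (div_eq_iff hN).2 (by ring)
  calc ∑ H ∈ powersetCard j univ, sumSupersets (j + 1) x H ^ 2
      = ∑ H ∈ powersetCard j univ, sumSupersets (j + 1) (fun E => z E + t) H ^ 2 := by
        simp only [z, sub_add_cancel]
    _ ≤ j * (n - (j + 1) : ℕ) * (∑ E ∈ powersetCard (j + 1) univ, x E ^ 2 - N * t ^ 2) +
          n.choose j * ((n - j : ℕ) * t) ^ 2 := by
        rw [sum_sq_sumSupersets_add_const j z hz, ← hz2]
        gcongr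
        exact sum_sq_sumSupersets_le_of_sum_eq_zero j z hz
    _ = _ := by
        rw [hs, hratio, Nat.cast_sub hn]
        rw [Nat.cast_sub (by omega : j ≤ n)] at hchoose₁ ⊢
        push_cast
        linear_combination ((n : 𝕜) - j) * t ^ 2 * hchoose₁

end Bey

/-- The `ℓ = k-1` case of Bey's inequality: for a `k`-uniform hypergraph `G` on `n` vertices,
`∑_{|H| = k-1} d(H)² ≤ (k/C(n-1,k-1))·|G|² + (k-1)(n-k)·|G|`. -/
theorem bey_inequality_codegree (n k : ℕ) (hk : 1 ≤ k)
    (G : Finset (Finset (Fin n))) (hG : ∀ E ∈ G, E.card = k) :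
    ∑ H ∈ Finset.univ.powersetCard (k - 1),
        (((G.filter fun E => H ⊆ E).card : ℚ)) ^ 2 ≤
      (k : ℚ) / (((n - 1).choose (k - 1) : ℕ) : ℚ) * (G.card : ℚ) ^ 2
        + ((k - 1 : ℕ) : ℚ) * ((n - k : ℕ) : ℚ) * (G.card : ℚ) := by
  obtain ⟨j, rfl⟩ : ∃ j, k = j + 1 := ⟨k - 1, by omega⟩
  have hGsub : G ⊆ powersetCard (j + 1) univ := fun E hE =>
    mem_powersetCard.2 ⟨subset_univ E, hG E hE⟩
  let x : Finset (Fin n) → ℚ := fun E => if E ∈ G then 1 else 0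
  have hdeg : ∀ H, sumSupersets (j + 1) x H = #{E ∈ G | H ⊆ E} := by
    intro H
    rw [sumSupersets, sum_boole]
    congr 2
    ext E
    simp only [mem_filter]
    exact ⟨fun h => ⟨h.2, h.1.2⟩, fun h => ⟨⟨hGsub h.1, h.2⟩, h.1⟩⟩
  have hsum : ∑ E ∈ powersetCard (j + 1) univ, x E = #G := by
    rw [sum_boole, filter_mem_eq_inter, inter_eq_right.2 hGsub]
  have hsq : ∑ E ∈ powersetCard (j + 1) univ, x E ^ 2 = #G := by
    simp only [x, ite_pow, one_pow, zero_pow two_ne_zero]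
    exact hsum
  simpa [hdeg, hsum, hsq] using sum_sq_sumSupersets_le (𝕜 := ℚ) j x
end

section
/- Let n ≥ 2k and let F ⊆ C([n],k) be an intersecting family of k-element subsets of [n]. Then the codegree squared sum co₂(F) = Σ_{E ∈ C([n],k-1)} d(E)² satisfies co₂(F) ≤ C(n-1,k-1)·(1 + (n-k+1)(k-1)). -/
/-!
For a function `g` on the `k`-subsets of an `n`-set let `∂g(E) = ∑_{A ⊇ E} g(A)` on the
`(k-1)`-sets (`sumSupersets`) and let `∂*` be its adjoint (`sumSubsets`). Then
`co₂(F) = ‖∂ 1_F‖²`. On functions on `j`-sets the two operators satisfy the commutation relation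
`∂∂* = ∂*∂ + (n - 2j)`; with Cauchy–Schwarz (`‖∂g‖² = ⟪g, ∂*∂g⟫`) and induction on `k` this
gives `‖∂g‖² ≤ (k-1)(n-k)‖g‖²` whenever `g` has mean zero, which is the second eigenvalue of the
Johnson graph shifted by `k`. Splitting `1_F` into its mean and a mean-zero part then yields
`co₂(F) ≤ (k-1)(n-k)|F| + n|F|²/C(n,k)`, and the Erdős–Ko–Rado bound
`|F| ≤ C(n-1,k-1) = k·C(n,k)/n` turns the last term into `k|F|`.
-/

open Finset

namespace JohnsonScheme

theorem sum_sq_sum_filter {ι κ : Type*} (I : Finset ι) (J : Finset κ) (p : ι → κ → Prop)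
    [∀ i j, Decidable (p i j)] (h : κ → ℝ) :
    ∑ i ∈ I, (∑ j ∈ J with p i j, h j) ^ 2 =
      ∑ j ∈ J, ∑ j' ∈ J, (#{i ∈ I | p i j ∧ p i j'} : ℝ) * (h j * h j') := by
  simp_rw [sq, sum_filter, sum_mul_sum, card_filter, Nat.cast_sum, sum_mul]
  rw [sum_comm]
  refine sum_congr rfl fun j _ => ?_
  rw [sum_comm]
  refine sum_congr rfl fun j' _ => sum_congr rfl fun i _ => ?_
  by_cases hj : p i j <;> by_cases hj' : p i j' <;> simp [hj, hj']

variable {α : Type*} [Fintype α] [DecidableEq α]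

def sumSupersets (r : ℕ) (g : Finset α → ℝ) (E : Finset α) : ℝ :=
  ∑ A ∈ powersetCard r univ with E ⊆ A, g A

def sumSubsets (r : ℕ) (h : Finset α → ℝ) (A : Finset α) : ℝ :=
  ∑ E ∈ powersetCard r univ with E ⊆ A, h E

theorem filter_subset_powersetCard_univ (r : ℕ) (A : Finset α) :
    {E ∈ powersetCard r (univ : Finset α) | E ⊆ A} = powersetCard r A := by
  ext E
  simp [mem_powersetCard, and_comm]

theorem sum_mul_sumSupersets (r s : ℕ) (g h : Finset α → ℝ) :
    ∑ E ∈ powersetCard s univ, h E * sumSupersets r g E =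
      ∑ A ∈ powersetCard r univ, g A * sumSubsets s h A := by
  simp only [sumSupersets, sumSubsets, mul_sum, sum_filter]
  rw [sum_comm]
  refine sum_congr rfl fun A _ => sum_congr rfl fun E _ => ?_
  split_ifs <;> ring

theorem sum_sumSupersets (r s : ℕ) (g : Finset α → ℝ) :
    ∑ E ∈ powersetCard s univ, sumSupersets r g E =
      r.choose s * ∑ A ∈ powersetCard r univ, g A := by
  have := sum_mul_sumSupersets r s g 1
  simp only [Pi.one_apply, one_mul, sumSubsets, sum_const, filter_subset_powersetCard_univ,
    card_powersetCard, nsmul_eq_mul, mul_one] at this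
  rw [this, mul_sum]
  refine sum_congr rfl fun A hA => ?_
  rw [(mem_powersetCard.1 hA).2, mul_comm]

theorem card_filter_subset_inter (m : ℕ) (E E' : Finset α) :
    #{G ∈ powersetCard m (univ : Finset α) | G ⊆ E ∧ G ⊆ E'} = (#(E ∩ E')).choose m := by
  simp_rw [← subset_inter_iff, filter_subset_powersetCard_univ, card_powersetCard]

theorem card_filter_superset_pair (m : ℕ) {E E' : Finset α} (hE : #E = m + 1)
    (hE' : #E' = m + 1) :
    (#{A ∈ powersetCard (m + 2) (univ : Finset α) | E ⊆ A ∧ E' ⊆ A} : ℝ) =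
      (#(E ∩ E')).choose m + if E = E' then (Fintype.card α : ℝ) - 2 * (m + 1) else 0 := by
  simp_rw [← union_subset_iff]
  have hsize : #(E ∪ E') + #(E ∩ E') = 2 * m + 2 := by rw [card_union_add_card_inter]; omega
  by_cases heq : E = E'
  · subst heq
    have hn : m + 1 ≤ Fintype.card α := hE ▸ card_le_univ E
    rw [union_self, inter_self, if_pos rfl, hE, Nat.choose_succ_self_right,
      card_filter_powersetCard_subset _ _ _ (subset_univ _) (by omega), card_univ, hE,
      show m + 2 - (m + 1) = 1 by omega, Nat.choose_one_right]
    push_cast [Nat.cast_sub hn]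
    ring
  have hinter : #(E ∩ E') ≤ m := by
    by_contra h
    have h1 := eq_of_subset_of_card_le inter_subset_left (by omega : #E ≤ #(E ∩ E'))
    have h2 := eq_of_subset_of_card_le inter_subset_right (by omega : #E' ≤ #(E ∩ E'))
    exact heq (h1.symm.trans h2)
  rw [if_neg heq, add_zero]
  rcases hinter.lt_or_eq with hlt | hm
  · rw [Nat.choose_eq_zero_of_lt hlt, Nat.cast_zero, Nat.cast_eq_zero, card_eq_zero,
      filter_eq_empty_iff]
    intro A hA hsub
    have := card_le_card hsub
    rw [(mem_powersetCard.1 hA).2] at this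
    omega
  · rw [hm, Nat.choose_self, card_filter_powersetCard_subset _ _ _ (subset_univ _) (by omega),
      show m + 2 - #(E ∪ E') = 0 by omega, Nat.choose_zero_right, Nat.cast_one]

theorem sum_sq_sumSubsets (m : ℕ) (h : Finset α → ℝ) :
    ∑ A ∈ powersetCard (m + 2) univ, sumSubsets (m + 1) h A ^ 2 =
      ∑ G ∈ powersetCard m univ, sumSupersets (m + 1) h G ^ 2 +
        ((Fintype.card α : ℝ) - 2 * (m + 1)) * ∑ E ∈ powersetCard (m + 1) univ, h E ^ 2 := by
  simp only [sumSubsets, sumSupersets]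
  rw [sum_sq_sum_filter, sum_sq_sum_filter, mul_sum, ← sum_add_distrib]
  refine sum_congr rfl fun E hE => ?_
  have hdiag : ((Fintype.card α : ℝ) - 2 * (m + 1)) * (h E * h E) =
      ∑ E' ∈ powersetCard (m + 1) univ,
        if E = E' then ((Fintype.card α : ℝ) - 2 * (m + 1)) * (h E * h E') else 0 := by
    rw [sum_ite_eq, if_pos hE]
  rw [sq, hdiag, ← sum_add_distrib]
  refine sum_congr rfl fun E' hE' => ?_
  rw [card_filter_superset_pair m (mem_powersetCard.1 hE).2 (mem_powersetCard.1 hE').2,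
    card_filter_subset_inter]
  split_ifs with heq
  · subst heq; ring
  · ring

theorem sum_sq_sumSupersets_le_of_sum_eq_zero (m : ℕ) (hm : m + 1 ≤ Fintype.card α)
    (g : Finset α → ℝ) (hg : ∑ A ∈ powersetCard (m + 1) univ, g A = 0) :
    ∑ E ∈ powersetCard m univ, sumSupersets (m + 1) g E ^ 2 ≤
      m * ((Fintype.card α : ℝ) - m - 1) * ∑ A ∈ powersetCard (m + 1) univ, g A ^ 2 := by
  induction m generalizing g with
  | zero => simp [sumSupersets, hg]
  | succ m ih =>
    set h := sumSupersets (m + 2) g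
    have hh : ∑ E ∈ powersetCard (m + 1) univ, h E = 0 := by
      rw [sum_sumSupersets, hg, mul_zero]
    have hshadow := ih (by omega) h hh
    have hcomm := sum_sq_sumSubsets m h
    have hadj : ∑ E ∈ powersetCard (m + 1) univ, h E ^ 2 =
        ∑ A ∈ powersetCard (m + 2) univ, g A * sumSubsets (m + 1) h A := by
      simpa only [sq] using sum_mul_sumSupersets (m + 2) (m + 1) g h
    set x := ∑ E ∈ powersetCard (m + 1) univ, h E ^ 2
    set y := ∑ A ∈ powersetCard (m + 2) univ, g A ^ 2
    set c : ℝ := (m + 1) * (Fintype.card α - (m + 1) - 1)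
    have hx : 0 ≤ x := sum_nonneg fun _ _ => sq_nonneg _
    have hn : (m : ℝ) + 2 ≤ Fintype.card α := by exact_mod_cast hm
    have hc : 0 ≤ c := mul_nonneg (by positivity) (by linarith)
    have hdown : ∑ A ∈ powersetCard (m + 2) univ, sumSubsets (m + 1) h A ^ 2 ≤ c * x := by
      rw [hcomm]
      linarith [show c * x = m * ((Fintype.card α : ℝ) - m - 1) * x +
        ((Fintype.card α : ℝ) - 2 * (m + 1)) * x by ring]
    -- Cauchy–Schwarz for `x = ⟪g, sumSubsets h⟫` gives `x ^ 2 ≤ y * (c * x)`.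
    have hcs : x * x ≤ c * y * x := by
      have := sum_mul_sq_le_sq_mul_sq (powersetCard (m + 2) univ) g (sumSubsets (m + 1) h)
      rw [← hadj] at this
      nlinarith [mul_le_mul_of_nonneg_left hdown (sum_nonneg fun A _ => sq_nonneg (g A) : 0 ≤ y)]
    push_cast
    rcases hx.eq_or_lt with hx0 | hxpos
    · rw [← hx0]
      exact mul_nonneg hc (sum_nonneg fun _ _ => sq_nonneg _)
    · exact le_of_mul_le_mul_right hcs hxpos

theorem sum_sq_sumSupersets_le (m : ℕ) (hm : m + 1 ≤ Fintype.card α) (f : Finset α → ℝ) :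
    ∑ E ∈ powersetCard m univ, sumSupersets (m + 1) f E ^ 2 ≤
      m * ((Fintype.card α : ℝ) - m - 1) * ∑ A ∈ powersetCard (m + 1) univ, f A ^ 2 +
        Fintype.card α * (∑ A ∈ powersetCard (m + 1) univ, f A) ^ 2 /
          (Fintype.card α).choose (m + 1) := by
  set N : ℝ := (((Fintype.card α).choose (m + 1) : ℕ) : ℝ)
  set S := ∑ A ∈ powersetCard (m + 1) univ, f A
  set c := S / N
  set g : Finset α → ℝ := fun A => f A - c
  have hN : 0 < N := Nat.cast_pos.2 (Nat.choose_pos hm)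
  have hcard : (#(powersetCard (m + 1) (univ : Finset α)) : ℝ) = N := by
    rw [card_powersetCard, card_univ]
  have hg : ∑ A ∈ powersetCard (m + 1) univ, g A = 0 := by
    simp only [g, sum_sub_distrib, sum_const, nsmul_eq_mul, hcard, c]
    field_simp
    ring
  have hg2 : ∑ A ∈ powersetCard (m + 1) univ, g A ^ 2 =
      ∑ A ∈ powersetCard (m + 1) univ, f A ^ 2 - c ^ 2 * N := by
    simp only [g, sub_sq, sum_add_distrib, sum_sub_distrib, sum_const, nsmul_eq_mul, hcard,
      ← sum_mul, ← mul_sum]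
    simp only [c]
    field_simp
    ring
  have hshift : ∀ E ∈ powersetCard m univ,
      sumSupersets (m + 1) f E = sumSupersets (m + 1) g E + c * (Fintype.card α - m) := by
    intro E hE
    have hE := (mem_powersetCard.1 hE).2
    simp only [sumSupersets, g, sum_sub_distrib, sum_const, nsmul_eq_mul,
      card_filter_powersetCard_subset E univ (m + 1) (subset_univ E) (by omega), card_univ, hE,
      show m + 1 - m = 1 by omega, Nat.choose_one_right]
    push_cast [Nat.cast_sub (show m ≤ Fintype.card α by omega)]
    ring
  have hs : ∑ E ∈ powersetCard m univ, sumSupersets (m + 1) g E = 0 := by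
    rw [sum_sumSupersets, hg, mul_zero]
  have hspec := sum_sq_sumSupersets_le_of_sum_eq_zero m hm g hg
  have hpascal : ((Fintype.card α : ℝ) - m) * (Fintype.card α).choose m = (m + 1) * N := by
    have := congrArg (Nat.cast (R := ℝ)) (Nat.choose_succ_right_eq (Fintype.card α) m)
    push_cast [Nat.cast_sub (show m ≤ Fintype.card α by omega)] at this
    linarith
  have hexpand :
      ∑ E ∈ powersetCard m univ, (sumSupersets (m + 1) g E + c * (Fintype.card α - m)) ^ 2 = ∑ E ∈ powersetCard m univ, sumSupersets (m + 1) g E ^ 2 +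
        c ^ 2 * ((Fintype.card α : ℝ) - m) ^ 2 * (Fintype.card α).choose m := by
    simp only [add_sq, sum_add_distrib, sum_const, card_powersetCard, card_univ, nsmul_eq_mul,
      ← sum_mul, ← mul_sum, hs]
    ring
  have hkey : c ^ 2 * ((Fintype.card α : ℝ) - m) ^ 2 * (Fintype.card α).choose m =
      m * ((Fintype.card α : ℝ) - m - 1) * (c ^ 2 * N) + Fintype.card α * S ^ 2 / N := by
    rw [show c ^ 2 * ((Fintype.card α : ℝ) - m) ^ 2 * (Fintype.card α).choose m =
      c ^ 2 * ((Fintype.card α : ℝ) - m) * ((m + 1) * N) by rw [← hpascal]; ring]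
    simp only [c]
    field_simp
    ring
  rw [sum_congr rfl fun E hE => by rw [hshift E hE], hexpand, hkey]
  rw [hg2] at hspec
  linarith

theorem sum_sq_card_filter_superset_le (m : ℕ) (hm : m + 1 ≤ Fintype.card α)
    (F : Finset (Finset α)) (hF : ∀ A ∈ F, #A = m + 1) :
    ∑ E ∈ powersetCard m univ, (#{A ∈ F | E ⊆ A} : ℝ) ^ 2 ≤
      m * ((Fintype.card α : ℝ) - m - 1) * #F +
        Fintype.card α * (#F : ℝ) ^ 2 / (Fintype.card α).choose (m + 1) := by
  set f : Finset α → ℝ := fun A => if A ∈ F then 1 else 0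
  have hfilter (p : Finset α → Prop) [DecidablePred p] :
      ∑ A ∈ powersetCard (m + 1) univ with p A, f A = #{A ∈ F | p A} := by
    rw [sum_boole]
    congr 2
    ext A
    simp only [mem_filter, mem_powersetCard, subset_univ, true_and]
    constructor
    · exact fun ⟨⟨_, hp⟩, hA⟩ => ⟨hA, hp⟩
    · exact fun ⟨hA, hp⟩ => ⟨⟨hF A hA, hp⟩, hA⟩
  have hsum : ∑ A ∈ powersetCard (m + 1) univ, f A = #F := by
    simpa using hfilter fun _ => True
  have hsq : ∑ A ∈ powersetCard (m + 1) univ, f A ^ 2 = #F := by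
    rw [← hsum]
    exact sum_congr rfl fun A _ => by simp only [f]; split_ifs <;> norm_num
  have := sum_sq_sumSupersets_le m hm f
  simp only [sumSupersets, hfilter, hsum, hsq] at this
  exact this

end JohnsonScheme

/-- Erdős–Ko–Rado in the ℓ₂-norm: if `F` is an intersecting family of `k`-subsets of `[n]`
with `n ≥ 2k`, then `co₂(F) ≤ C(n-1,k-1)·(1 + (n-k+1)(k-1))`. -/
theorem ekr_l2 (n k : ℕ) (hn : 2 * k ≤ n)
    (F : Finset (Finset (Fin n))) (hF : ∀ A ∈ F, A.card = k)
    (hint : ∀ A ∈ F, ∀ B ∈ F, (A ∩ B).Nonempty) :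
    ∑ E ∈ Finset.univ.powersetCard (k - 1), ((F.filter fun A => E ⊆ A).card) ^ 2 ≤
      (n - 1).choose (k - 1) * (1 + (n - k + 1) * (k - 1)) := by
  obtain rfl | ⟨m, rfl⟩ : F = ∅ ∨ ∃ m, k = m + 1 := by
    refine k.eq_zero_or_eq_succ_pred.imp
      (fun hk => eq_empty_of_forall_notMem fun A hA => ?_) (⟨_, ·⟩)
    simpa [card_eq_zero.1 (hk ▸ hF A hA)] using hint A hA A hA
  · simp
  have hEKR : #F ≤ (n - 1).choose m := erdos_ko_rado
    (fun A hA B hB => not_disjoint_iff_nonempty_inter.2 (hint A hA B hB)) hF (by omega)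
  have hEKR' : n * #F ≤ (m + 1) * n.choose (m + 1) := by
    obtain ⟨n, rfl⟩ : ∃ n', n = n' + 1 := ⟨n - 1, by omega⟩
    simpa [Nat.add_one_mul_choose_eq, mul_comm (m + 1)] using Nat.mul_le_mul_left (n + 1) hEKR
  have hco₂ := JohnsonScheme.sum_sq_card_filter_superset_le m
    (by rw [Fintype.card_fin]; omega) F hF
  rw [Fintype.card_fin] at hco₂
  have hreal : ∑ E ∈ powersetCard m univ, (#{A ∈ F | E ⊆ A} : ℝ) ^ 2 ≤
      (n - 1).choose m * (1 + ((n - m : ℕ) : ℝ) * m) := by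
    have hN : (0 : ℝ) < n.choose (m + 1) := Nat.cast_pos.2 (Nat.choose_pos (by omega))
    have hlast : (n : ℝ) * #F ^ 2 / n.choose (m + 1) ≤ (m + 1) * #F := by
      rw [div_le_iff₀ hN]
      nlinarith [(by exact_mod_cast hEKR' : (n : ℝ) * #F ≤ (m + 1) * n.choose (m + 1))]
    have hmn : (m : ℝ) ≤ n := by exact_mod_cast (by omega : m ≤ n)
    have hF' : (#F : ℝ) ≤ (n - 1).choose m := by exact_mod_cast hEKR
    rw [Nat.cast_sub (by omega)]
    nlinarith [mul_nonneg (sub_nonneg.2 hmn) (Nat.cast_nonneg m)]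
  rw [show n - (m + 1) + 1 = n - m by omega, Nat.add_sub_cancel]
  exact_mod_cast hreal
end

section
/- For the family B(n,k,s) = {F ∈ C([n],k) : F ∩ [s] ≠ ∅} (with s ≤ n, k ≤ n), the codegree squared sum equals co₂(B(n,k,s)) = s²·C(n-s,k-1) + (n-k+1)²·(C(n,k-1) − C(n-s,k-1)). -/
open Finset

lemma card_S (n s : ℕ) (hs : s ≤ n) :
    (Finset.univ.filter fun v : Fin n => (v : ℕ) < s).card = s := by
  have : (Finset.univ.filter fun v : Fin n => (v : ℕ) < s)
      = (Finset.univ : Finset (Fin s)).map (Fin.castLEEmb hs) := by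
    ext v
    simp only [mem_filter, mem_univ, true_and, mem_map, Fin.castLEEmb, Fin.castLE]
    constructor
    · intro hv
      refine ⟨⟨(v : ℕ), hv⟩, ?_⟩
      ext
      simp
    · rintro ⟨w, -, rfl⟩
      exact w.isLt
  rw [this, card_map, card_univ, Fintype.card_fin]

lemma deg_eq (n k s : ℕ) (hk : 1 ≤ k) (hkn : k ≤ n) (E : Finset (Fin n))
    (hE : E.card = k - 1) :
    (((Finset.univ.powersetCard k).filter fun A : Finset (Fin n) =>
        (A ∩ (Finset.univ.filter fun v : Fin n => (v : ℕ) < s)).Nonempty).filter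
          fun A => E ⊆ A).card
      = if (E ∩ (Finset.univ.filter fun v : Fin n => (v : ℕ) < s)).Nonempty
          then n - k + 1 else (Finset.univ.filter fun v : Fin n => (v : ℕ) < s).card := by
  set S := Finset.univ.filter fun v : Fin n => (v : ℕ) < s with hS
  have key : ((Finset.univ.powersetCard k).filter fun A : Finset (Fin n) =>
        (A ∩ S).Nonempty).filter (fun A => E ⊆ A)
      = (Eᶜ.filter fun v => ((insert v E) ∩ S).Nonempty).image (fun v => insert v E) := by
    ext A
    simp only [mem_filter, mem_powersetCard, mem_univ, subset_univ, true_and, mem_image,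
      mem_compl]
    constructor
    · rintro ⟨⟨hAk, hAS⟩, hEA⟩
      have hcard : (A \ E).card = 1 := by
        rw [card_sdiff_of_subset hEA, hAk, hE]; omega
      obtain ⟨v, hv⟩ := card_eq_one.mp hcard
      have hvA : v ∈ A \ E := hv ▸ mem_singleton_self v
      have hAeq : A = insert v E := by
        apply Finset.Subset.antisymm
        · intro x hx
          by_cases hxE : x ∈ E
          · exact mem_insert_of_mem hxE
          · have : x ∈ A \ E := mem_sdiff.mpr ⟨hx, hxE⟩
            rw [hv, mem_singleton] at this
            exact this ▸ mem_insert_self x E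
        · exact insert_subset (mem_sdiff.mp hvA).1 hEA
      exact ⟨v, ⟨(mem_sdiff.mp hvA).2, hAeq ▸ hAS⟩, hAeq.symm⟩
    · rintro ⟨v, ⟨hvE, hns⟩, rfl⟩
      refine ⟨⟨?_, hns⟩, subset_insert v E⟩
      rw [card_insert_of_notMem hvE, hE]; omega
  rw [key, card_image_of_injOn]
  · by_cases hES : (E ∩ S).Nonempty
    · rw [if_pos hES]
      have : (Eᶜ.filter fun v => ((insert v E) ∩ S).Nonempty) = Eᶜ := by
        apply filter_true_of_mem
        intro v _
        obtain ⟨x, hx⟩ := hES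
        exact ⟨x, mem_inter.mpr ⟨mem_insert_of_mem (mem_inter.mp hx).1,
          (mem_inter.mp hx).2⟩⟩
      rw [this, card_compl, Fintype.card_fin, hE]; omega
    · rw [if_neg hES]
      have : (Eᶜ.filter fun v => ((insert v E) ∩ S).Nonempty) = S := by
        ext v
        simp only [mem_filter, mem_compl]
        constructor
        · rintro ⟨hvE, x, hx⟩
          rw [mem_inter, mem_insert] at hx
          rcases hx.1 with rfl | hxE
          · exact hx.2
          · exact absurd ⟨x, mem_inter.mpr ⟨hxE, hx.2⟩⟩ hES
        · intro hvS
          have hvE : v ∉ E := fun h => hES ⟨v, mem_inter.mpr ⟨h, hvS⟩⟩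
          exact ⟨hvE, v, mem_inter.mpr ⟨mem_insert_self v E, hvS⟩⟩
      rw [this]
  · intro a ha b hb hab
    have haE : a ∉ E := (mem_compl.mp (mem_filter.mp ha).1)
    have hbE : b ∉ E := (mem_compl.mp (mem_filter.mp hb).1)
    simp only at hab
    have : a ∈ insert b E := hab ▸ mem_insert_self a E
    rcases mem_insert.mp this with h | h
    · exact h
    · exact absurd h haE

/-- Codegree squared sum of `B(n,k,s) = {F ∈ C([n],k) : F ∩ [s] ≠ ∅}`:
`co₂(B(n,k,s)) = s²·C(n-s,k-1) + (n-k+1)²·(C(n,k-1) − C(n-s,k-1))`. -/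
theorem co2_B (n k s : ℕ) (hk : 1 ≤ k) (hkn : k ≤ n) (hs : s ≤ n) :
    ∑ E ∈ Finset.univ.powersetCard (k - 1),
        ((((Finset.univ.powersetCard k).filter fun A : Finset (Fin n) =>
            (A ∩ (Finset.univ.filter fun v : Fin n => (v : ℕ) < s)).Nonempty).filter
              fun A => E ⊆ A).card) ^ 2 =
      s ^ 2 * (n - s).choose (k - 1)
        + (n - k + 1) ^ 2 * (n.choose (k - 1) - (n - s).choose (k - 1)) := by
  set S := Finset.univ.filter fun v : Fin n => (v : ℕ) < s with hS
  have hsum : ∑ E ∈ Finset.univ.powersetCard (k - 1),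
        ((((Finset.univ.powersetCard k).filter fun A : Finset (Fin n) =>
            (A ∩ S).Nonempty).filter fun A => E ⊆ A).card) ^ 2
      = ∑ E ∈ Finset.univ.powersetCard (k - 1),
          (if (E ∩ S).Nonempty then n - k + 1 else S.card) ^ 2 := by
    apply Finset.sum_congr rfl
    intro E hE
    rw [deg_eq n k s hk hkn E (Finset.mem_powersetCard.mp hE).2]
  rw [hsum]
  have hScard : S.card = s := card_S n s hs
  have hdisj : (Finset.univ.powersetCard (k - 1)).filter
      (fun E : Finset (Fin n) => ¬(E ∩ S).Nonempty) = Sᶜ.powersetCard (k - 1) := by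
    ext E
    simp only [Finset.mem_filter, Finset.mem_powersetCard, Finset.mem_univ,
      Finset.subset_univ, true_and, Finset.not_nonempty_iff_eq_empty]
    constructor
    · rintro ⟨hE, hES⟩
      exact ⟨fun x hx => Finset.mem_compl.mpr fun hxS =>
        (Finset.eq_empty_iff_forall_notMem.mp hES x) (Finset.mem_inter.mpr ⟨hx, hxS⟩), hE⟩
    · rintro ⟨hsub, hE⟩
      refine ⟨hE, Finset.eq_empty_iff_forall_notMem.mpr fun x hx => ?_⟩
      exact Finset.mem_compl.mp (hsub (Finset.mem_inter.mp hx).1) (Finset.mem_inter.mp hx).2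
  have hdiscard : ((Finset.univ.powersetCard (k - 1)).filter
      (fun E : Finset (Fin n) => ¬(E ∩ S).Nonempty)).card = (n - s).choose (k - 1) := by
    rw [hdisj, Finset.card_powersetCard, Finset.card_compl, Fintype.card_fin, hScard]
  have htotal : (Finset.univ.powersetCard (k - 1) : Finset (Finset (Fin n))).card
      = n.choose (k - 1) := by
    rw [Finset.card_powersetCard, Finset.card_univ, Fintype.card_fin]
  have hposcard : ((Finset.univ.powersetCard (k - 1)).filter
      (fun E : Finset (Fin n) => (E ∩ S).Nonempty)).card
      = n.choose (k - 1) - (n - s).choose (k - 1) := by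
    have := Finset.card_filter_add_card_filter_not
      (s := (Finset.univ.powersetCard (k - 1) : Finset (Finset (Fin n))))
      (p := fun E : Finset (Fin n) => (E ∩ S).Nonempty)
    omega
  calc ∑ E ∈ Finset.univ.powersetCard (k - 1),
        (if (E ∩ S).Nonempty then n - k + 1 else S.card) ^ 2
      = ∑ E ∈ Finset.univ.powersetCard (k - 1),
        (if (E ∩ S).Nonempty then (n - k + 1) ^ 2 else S.card ^ 2) := by
        apply Finset.sum_congr rfl; intro E _; split_ifs <;> rfl
    _ = ((Finset.univ.powersetCard (k - 1)).filter
          (fun E : Finset (Fin n) => (E ∩ S).Nonempty)).card * (n - k + 1) ^ 2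
        + ((Finset.univ.powersetCard (k - 1)).filter
          (fun E : Finset (Fin n) => ¬(E ∩ S).Nonempty)).card * S.card ^ 2 := by
        rw [Finset.sum_ite, Finset.sum_const, Finset.sum_const, smul_eq_mul, smul_eq_mul]
    _ = s ^ 2 * (n - s).choose (k - 1)
        + (n - k + 1) ^ 2 * (n.choose (k - 1) - (n - s).choose (k - 1)) := by
        rw [hposcard, hdiscard, hScard]; ring
end

section
/- For any 2-uniform graph G on n vertices (the ℓ = 1, k = 2 case of Bey's inequality), the sum of the squares of the vertex degrees satisfies Σ_v d(v)² ≤ (2/(n-1))·|E(G)|² + (n-2)·|E(G)|. -/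
/-!
For a symmetric matrix `A` with zero diagonal and row sums `d`, Cauchy–Schwarz applied to the
difference of rows `u ≠ w`, restricted to the `n - 2` columns other than `u` and `w`, gives
`(d u - d w)² ≤ (n - 2) · (∑ v, (A u v - A w v)² - 2 A u w²)`. Summing over all pairs `(u, w)`
expresses both sides through `∑ d`, `∑ d²` and `∑ A²`. For the adjacency matrix `∑ A² = ∑ d = 2|E|`,
and the resulting bound is de Caen's.
-/

open Finset

section

variable {ι R : Type*} [Fintype ι]

theorem sum_sum_sub_sq [CommRing R] (f : ι → R) :
    ∑ i, ∑ j, (f i - f j) ^ 2 = 2 * Fintype.card ι * ∑ i, f i ^ 2 - 2 * (∑ i, f i) ^ 2 := by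
  simp only [sub_sq, sum_add_distrib, sum_sub_distrib, sum_const, card_univ, nsmul_eq_mul,
    ← mul_sum, ← sum_mul, sq (∑ i, f i)]
  ring

namespace Matrix

variable [CommRing R] [LinearOrder R] [IsStrictOrderedRing R]
  {A : Matrix ι ι R}

theorem IsSymm.sq_sum_sub_le (hA : A.IsSymm) (hd : A.diag = 0) (i j : ι) :
    (∑ k, (A i k - A j k)) ^ 2 ≤
      (Fintype.card ι - 2) * (∑ k, (A i k - A j k) ^ 2 - 2 * A i j ^ 2) := by
  classical
  have hii : A i i = 0 := congrFun hd i
  rcases eq_or_ne i j with rfl | hij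
  · simp [hii]
  have hjj : A j j = 0 := congrFun hd j
  have hji : A j i = A i j := hA.apply i j
  set s := (univ.erase i).erase j
  have hj : j ∈ univ.erase i := mem_erase.2 ⟨hij.symm, mem_univ j⟩
  have hsplit (g : ι → R) : ∑ k, g k = g i + g j + ∑ k ∈ s, g k := by
    rw [← add_sum_erase _ _ (mem_univ i), ← add_sum_erase _ _ hj, add_assoc]
  have hcard : (#s : R) = Fintype.card ι - 2 := by
    have : #s + 2 = Fintype.card ι := by
      have := Fintype.one_lt_card_iff.2 ⟨i, j, hij⟩
      rw [card_erase_of_mem hj, card_erase_of_mem (mem_univ i), card_univ]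
      omega
    rw [← this]; push_cast; ring
  have hsum : ∑ k, (A i k - A j k) = ∑ k ∈ s, (A i k - A j k) := by
    rw [hsplit, hii, hjj, hji]; ring
  have hsq : ∑ k, (A i k - A j k) ^ 2 - 2 * A i j ^ 2 = ∑ k ∈ s, (A i k - A j k) ^ 2 := by
    rw [hsplit, hii, hjj, hji]; ring
  rw [hsum, hsq, ← hcard]
  exact sq_sum_le_card_mul_sum_sq

theorem IsSymm.sum_sq_sum_row_le (hA : A.IsSymm) (hd : A.diag = 0) :
    2 * (Fintype.card ι - 1) * ∑ i, (∑ k, A i k) ^ 2 ≤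
      (∑ i, ∑ k, A i k) ^ 2 + (Fintype.card ι - 1) * (Fintype.card ι - 2) * ∑ i, ∑ k, A i k ^ 2 := by
  set n : R := (Fintype.card ι : R)
  have hcol (k : ι) : ∑ i, A i k = ∑ i, A k i := sum_congr rfl fun i _ => hA.apply k i
  have hlhs : ∑ i, ∑ j, (∑ k, (A i k - A j k)) ^ 2 =
      2 * n * ∑ i, (∑ k, A i k) ^ 2 - 2 * (∑ i, ∑ k, A i k) ^ 2 := by
    simp only [sum_sub_distrib]
    exact sum_sum_sub_sq _
  have hrhs : ∑ i, ∑ j, (∑ k, (A i k - A j k) ^ 2) =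
      2 * n * ∑ i, ∑ k, A i k ^ 2 - 2 * ∑ i, (∑ k, A i k) ^ 2 := by
    rw [sum_congr rfl fun i _ => sum_comm, sum_comm]
    simp only [sum_sum_sub_sq, sum_sub_distrib, ← mul_sum, hcol]
    rw [sum_comm]
  have hpairs : 2 * n * ∑ i, (∑ k, A i k) ^ 2 - 2 * (∑ i, ∑ k, A i k) ^ 2 ≤
      (n - 2) * (2 * n * ∑ i, ∑ k, A i k ^ 2 - 2 * ∑ i, (∑ k, A i k) ^ 2
        - 2 * ∑ i, ∑ k, A i k ^ 2) := calc
    _ = ∑ i, ∑ j, (∑ k, (A i k - A j k)) ^ 2 := hlhs.symm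
    _ ≤ ∑ i, ∑ j, (n - 2) * (∑ k, (A i k - A j k) ^ 2 - 2 * A i j ^ 2) :=
      sum_le_sum fun i _ => sum_le_sum fun j _ => hA.sq_sum_sub_le hd i j
    _ = _ := by simp only [← mul_sum, sum_sub_distrib, hrhs]
  refine le_of_mul_le_mul_left ?_ (two_pos : (0 : R) < 2)
  linear_combination hpairs

end Matrix

end

namespace SimpleGraph

variable {V R : Type*} [Fintype V] [CommRing R] [LinearOrder R]
  [IsStrictOrderedRing R] (G : SimpleGraph V) [DecidableRel G.Adj]

theorem card_sub_one_mul_sum_sq_degree_le :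
    (Fintype.card V - 1) * ∑ v, (G.degree v : R) ^ 2 ≤
      2 * (#G.edgeFinset : R) ^ 2 + (Fintype.card V - 1) * (Fintype.card V - 2) * #G.edgeFinset := by
  have hdeg (v : V) : ∑ w, G.adjMatrix R v w = G.degree v := by
    simp [adjMatrix_apply, sum_boole, ← card_neighborFinset_eq_degree, neighborFinset_eq_filter]
  have hsq (v w : V) : G.adjMatrix R v w ^ 2 = G.adjMatrix R v w := by
    by_cases h : G.Adj v w <;> simp [h]
  have hsum : ∑ v, (G.degree v : R) = 2 * #G.edgeFinset := by
    exact_mod_cast G.sum_degrees_eq_twice_card_edges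
  have key := (G.isSymm_adjMatrix (α := R)).sum_sq_sum_row_le (G.diag_adjMatrix (α := R))
  simp only [hsq, hdeg, hsum] at key
  refine le_of_mul_le_mul_left ?_ (two_pos : (0 : R) < 2)
  linear_combination key

end SimpleGraph

/-- De Caen's inequality: for a simple graph `G` on `n` vertices,
`∑_v d(v)² ≤ (2/(n-1))·|E(G)|² + (n-2)·|E(G)|`. -/
theorem deCaen_inequality (n : ℕ) (G : SimpleGraph (Fin n)) [DecidableRel G.Adj] :
    ∑ v : Fin n, (G.degree v : ℚ) ^ 2 ≤
      2 / ((n : ℚ) - 1) * (G.edgeFinset.card : ℚ) ^ 2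
        + ((n : ℚ) - 2) * (G.edgeFinset.card : ℚ) := by
  rcases lt_or_ge n 2 with hn | hn
  · have hdeg (v : Fin n) : G.degree v = 0 := by
      have := G.degree_lt_card_verts v
      rw [Fintype.card_fin] at this
      omega
    have hm : #G.edgeFinset = 0 := by
      have := G.sum_degrees_eq_twice_card_edges
      simp only [hdeg, sum_const_zero] at this
      omega
    simp [hdeg, hm]
  · have key := G.card_sub_one_mul_sum_sq_degree_le (R := ℚ)
    have hn1 : (0 : ℚ) < n - 1 := by
      have : (2 : ℚ) ≤ n := by exact_mod_cast hn
      linarith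
    rw [Fintype.card_fin] at key
    rw [div_mul_eq_mul_div, div_add' _ _ _ hn1.ne', le_div_iff₀ hn1]
    linear_combination key
end

section
/- Let k, s ≥ 1. There exists n₀ = n₀(k,s) such that for all n ≥ n₀, every family F ⊆ C([n],k) with matching number ν(F) ≤ s satisfies co₂(F) ≤ co₂(B(n,k,s)) = s²·C(n-s,k-1) + (n-k+1)²·(C(n,k-1) − C(n-s,k-1)), with equality if and only if F is isomorphic to B(n,k,s). -/
/-!
Induction on `s`, simultaneously for all ground sets `V` with `#V ≥ n₀(k, s)`, together with the
size bound `|F| ≤ C(n, k) - C(n - s, k)`. If some vertex `v` has degree above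
`s k C(n - 2, k - 2)`, the sets avoiding `v` have matching number `< s`; in `co₂` each
`(k-1)`-set through `v` contributes at most `(n - k + 1)²` and each other `(k-1)`-set gains at
most one from the sets through `v`, so comparing with `B(V, k, T ∪ {v})` reduces both the bound
and its equality case to the induction hypothesis on `V \ {v}`. Otherwise a cover of size
`≤ s k` makes `|F| = O(C(n - 2, k - 2))`, and `co₂(F) ≤ (n - k + 1) k |F|` falls strictly below
`co₂(B)`. For `k = 1` the family is a matching of singletons.
-/

open Finset

namespace ErdosMatching

theorem mul_choose_le_choose {a n k : ℕ} (hn : 2 ≤ n) (hk : 2 ≤ k) (h : a * (k - 1) ≤ n - 1) :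
    a * (n - 2).choose (k - 2) ≤ (n - 1).choose (k - 1) := by
  obtain ⟨n, rfl⟩ := Nat.exists_eq_add_of_le' hn
  obtain ⟨k, rfl⟩ := Nat.exists_eq_add_of_le' hk
  simp only [Nat.add_sub_cancel, Nat.add_succ_sub_one] at h ⊢
  refine Nat.le_of_mul_le_mul_right ?_ k.succ_pos
  calc a * n.choose k * (k + 1) = a * (k + 1) * n.choose k := by ring
    _ ≤ (n + 1) * n.choose k := Nat.mul_le_mul_right _ h
    _ = (n + 1).choose (k + 1) * (k + 1) := Nat.add_one_mul_choose_eq n k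

theorem choose_pred_le_choose_sub_choose {n k t : ℕ} (hn : 1 ≤ n) (hk : 1 ≤ k) (ht : 1 ≤ t) :
    (n - 1).choose (k - 1) ≤ n.choose k - (n - t).choose k := by
  have := Nat.choose_eq_choose_pred_add (n := n) (k := k) (by omega) (by omega)
  have := Nat.choose_le_choose k (show n - t ≤ n - 1 by omega)
  omega

variable {α : Type*}

def MatchingNumberLE (F : Finset (Finset α)) (s : ℕ) : Prop :=
  ∀ M ⊆ F, (M : Set (Finset α)).Pairwise Disjoint → #M ≤ s

variable [DecidableEq α]

def deg (F : Finset (Finset α)) (E : Finset α) : ℕ := #{A ∈ F | E ⊆ A}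

def co2 (V : Finset α) (k : ℕ) (F : Finset (Finset α)) : ℕ :=
  ∑ E ∈ V.powersetCard (k - 1), deg F E ^ 2

/-- The paper's `B(n, k, s)`, with `[n]` and `[s]` replaced by `V` and `S ⊆ V`. -/
def hitting (V : Finset α) (k : ℕ) (S : Finset α) : Finset (Finset α) :=
  {A ∈ V.powersetCard k | (A ∩ S).Nonempty}

/-- The value of `co₂` on `B(n, k, s)`, see `co2_hitting`. -/
def co2Max (n k s : ℕ) : ℕ :=
  s ^ 2 * (n - s).choose (k - 1) + (n - k + 1) ^ 2 * (n.choose (k - 1) - (n - s).choose (k - 1))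

section Degree

variable {V : Finset α} {k : ℕ} {F : Finset (Finset α)}

theorem deg_le_choose (hF : F ⊆ V.powersetCard k) {E : Finset α} (hE : #E ≤ k) :
    deg F E ≤ (#V - #E).choose (k - #E) := by
  by_cases hEV : E ⊆ V
  · rw [← card_filter_powersetCard_subset E V k hEV hE]
    exact card_le_card (filter_subset_filter _ hF)
  · have : deg F E = 0 :=
      card_eq_zero.2 <| filter_eq_empty_iff.2 fun A hA hEA =>
        hEV (hEA.trans (mem_powersetCard.1 (hF hA)).1)
    omega

theorem mem_of_deg_pos {v : α} (hF : F ⊆ V.powersetCard k) (hv : 0 < deg F {v}) : v ∈ V := by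
  obtain ⟨A, hA⟩ := card_pos.1 hv
  rw [mem_filter, singleton_subset_iff] at hA
  exact (mem_powersetCard.1 (hF hA.1)).1 hA.2

theorem deg_eq_ite_of_card_eq (hF : F ⊆ V.powersetCard k) {E : Finset α} (hE : #E = k) :
    deg F E = if E ∈ F then 1 else 0 := by
  have : {A ∈ F | E ⊆ A} = {A ∈ F | A = E} :=
    filter_congr fun A hA => ⟨fun hEA => (eq_of_subset_of_card_le hEA
      (by rw [hE, (mem_powersetCard.1 (hF hA)).2])).symm, fun h => h ▸ subset_refl _⟩
  rw [deg, this, filter_eq']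
  split_ifs <;> simp

theorem deg_le_of_mem_powersetCard (hF : F ⊆ V.powersetCard k) (hk : 1 ≤ k) {E : Finset α}
    (hE : E ∈ V.powersetCard (k - 1)) : deg F E ≤ #V - k + 1 := by
  have hEk := (mem_powersetCard.1 hE).2
  have := deg_le_choose hF (E := E) (by omega)
  rw [hEk, show k - (k - 1) = 1 by omega, Nat.choose_one_right] at this
  omega

theorem deg_eq_iff_forall_mem (hF : F ⊆ V.powersetCard k) (hk : 1 ≤ k) (hkV : k ≤ #V) {E : Finset α}
    (hE : E ∈ V.powersetCard (k - 1)) :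
    deg F E = #V - k + 1 ↔ ∀ A ∈ V.powersetCard k, E ⊆ A → A ∈ F := by
  obtain ⟨hEV, hEk⟩ := mem_powersetCard.1 hE
  have hsub : {A ∈ F | E ⊆ A} ⊆ {A ∈ V.powersetCard k | E ⊆ A} := filter_subset_filter _ hF
  have hall : #{A ∈ V.powersetCard k | E ⊆ A} = #V - k + 1 := by
    rw [card_filter_powersetCard_subset E V k hEV (by omega), hEk,
      show k - (k - 1) = 1 by omega, Nat.choose_one_right]
    omega
  rw [deg, ← hall]
  constructor
  · intro h A hA hEA
    exact (mem_filter.1 (eq_of_subset_of_card_le hsub h.ge ▸ mem_filter.2 ⟨hA, hEA⟩)).1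
  · intro h
    congr 1
    exact hsub.antisymm fun A hA => mem_filter.2 ⟨h A (mem_filter.1 hA).1 (mem_filter.1 hA).2,
      (mem_filter.1 hA).2⟩

theorem sum_deg_powersetCard (hF : F ⊆ V.powersetCard k) (j : ℕ) :
    ∑ E ∈ V.powersetCard j, deg F E = k.choose j * #F := by
  calc ∑ E ∈ V.powersetCard j, deg F E
      = ∑ A ∈ F, #((V.powersetCard j).bipartiteBelow (· ⊆ ·) A) :=
        sum_card_bipartiteAbove_eq_sum_card_bipartiteBelow _
    _ = ∑ _A ∈ F, k.choose j := sum_congr rfl fun A hA => by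
        obtain ⟨hAV, hAk⟩ := mem_powersetCard.1 (hF hA)
        have : (V.powersetCard j).bipartiteBelow (· ⊆ ·) A = A.powersetCard j := by
          ext E
          simp only [bipartiteBelow, mem_filter, mem_powersetCard]
          exact ⟨fun h => ⟨h.2, h.1.2⟩, fun h => ⟨⟨h.1.trans hAV, h.2⟩, h.1⟩⟩
        rw [this, card_powersetCard, hAk]
    _ = k.choose j * #F := by rw [sum_const, smul_eq_mul, mul_comm]

theorem co2_le_mul_card (hF : F ⊆ V.powersetCard k) (hk : 1 ≤ k) :
    co2 V k F ≤ (#V - k + 1) * (k * #F) := by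
  calc co2 V k F ≤ ∑ E ∈ V.powersetCard (k - 1), (#V - k + 1) * deg F E :=
        sum_le_sum fun E hE => by
          rw [sq]; exact Nat.mul_le_mul_right _ (deg_le_of_mem_powersetCard hF hk hE)
    _ = (#V - k + 1) * (k * #F) := by
        rw [← mul_sum, sum_deg_powersetCard hF,
          Nat.choose_symm_of_eq_add (by omega : k = k - 1 + 1), Nat.choose_one_right]

theorem co2_eq_sum_mem_add_sum_erase (v : α) :
    co2 V k F = ∑ E ∈ V.powersetCard (k - 1) with v ∈ E, deg F E ^ 2 +
      ∑ E ∈ (V.erase v).powersetCard (k - 1), deg F E ^ 2 := by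
  rw [co2, ← sum_filter_add_sum_filter_not _ (v ∈ ·)]
  congr 2
  ext E
  simp only [mem_filter, mem_powersetCard, subset_erase]
  tauto

theorem filter_notMem_subset_powersetCard_erase (hF : F ⊆ V.powersetCard k) (v : α) :
    {A ∈ F | v ∉ A} ⊆ (V.erase v).powersetCard k := fun A hA => by
  obtain ⟨hAF, hvA⟩ := mem_filter.1 hA
  obtain ⟨hAV, hAk⟩ := mem_powersetCard.1 (hF hAF)
  exact mem_powersetCard.2 ⟨subset_erase.2 ⟨hAV, hvA⟩, hAk⟩

theorem deg_eq_deg_filter_notMem_add (hF : F ⊆ V.powersetCard k) {v : α} {E : Finset α}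
    (hvE : v ∉ E) (hEk : #E + 1 = k) :
    deg F E = deg {A ∈ F | v ∉ A} E + if insert v E ∈ F then 1 else 0 := by
  rw [← deg_eq_ite_of_card_eq hF (by rw [card_insert_of_notMem hvE, hEk]), deg, deg, deg,
    ← card_filter_add_card_filter_not (s := {A ∈ F | E ⊆ A}) (v ∉ ·), filter_filter,
    filter_filter, filter_filter]
  congr 2 <;> ext A <;> simp only [mem_filter, insert_subset_iff] <;> tauto

theorem sum_sq_deg_add_one (hF : F ⊆ V.powersetCard k) (hk : 1 ≤ k) :
    ∑ E ∈ V.powersetCard (k - 1), (deg F E + 1) ^ 2 =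
      co2 V k F + 2 * (k * #F) + (#V).choose (k - 1) := by
  have hsum := sum_deg_powersetCard hF (k - 1)
  rw [Nat.choose_symm_of_eq_add (by omega : k = k - 1 + 1), Nat.choose_one_right] at hsum
  simp only [add_sq, mul_one, one_pow, sum_add_distrib, sum_const, card_powersetCard,
    smul_eq_mul, co2]
  rw [← mul_sum, hsum]

theorem sum_sq_deg_erase_le (hF : F ⊆ V.powersetCard k) (hk : 1 ≤ k) (v : α) :
    ∑ E ∈ (V.erase v).powersetCard (k - 1), deg F E ^ 2 ≤
      ∑ E ∈ (V.erase v).powersetCard (k - 1), (deg {A ∈ F | v ∉ A} E + 1) ^ 2 := by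
  refine sum_le_sum fun E hE => Nat.pow_le_pow_left ?_ 2
  obtain ⟨hEV, hEk⟩ := mem_powersetCard.1 hE
  rw [deg_eq_deg_filter_notMem_add hF (fun h => notMem_erase v V (hEV h)) (by omega)]
  split_ifs <;> omega

theorem sum_sq_deg_erase_eq (hF : F ⊆ V.powersetCard k) (hk : 1 ≤ k) (v : α)
    (hins : ∀ E ∈ (V.erase v).powersetCard (k - 1), insert v E ∈ F) :
    ∑ E ∈ (V.erase v).powersetCard (k - 1), deg F E ^ 2 =
      ∑ E ∈ (V.erase v).powersetCard (k - 1), (deg {A ∈ F | v ∉ A} E + 1) ^ 2 := by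
  refine sum_congr rfl fun E hE => ?_
  obtain ⟨hEV, hEk⟩ := mem_powersetCard.1 hE
  rw [deg_eq_deg_filter_notMem_add hF (fun h => notMem_erase v V (hEV h)) (by omega),
    if_pos (hins E hE)]

theorem sum_sq_deg_le (hF : F ⊆ V.powersetCard k) (hk : 1 ≤ k) {P : Finset (Finset α)}
    (hP : P ⊆ V.powersetCard (k - 1)) : ∑ E ∈ P, deg F E ^ 2 ≤ #P * (#V - k + 1) ^ 2 := by
  rw [← smul_eq_mul, ← sum_const]
  exact sum_le_sum fun E hE => Nat.pow_le_pow_left (deg_le_of_mem_powersetCard hF hk (hP hE)) 2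

theorem sum_sq_deg_eq_iff_forall_mem (hF : F ⊆ V.powersetCard k) (hk : 1 ≤ k) (hkV : k ≤ #V)
    {P : Finset (Finset α)} (hP : P ⊆ V.powersetCard (k - 1)) :
    ∑ E ∈ P, deg F E ^ 2 = #P * (#V - k + 1) ^ 2 ↔
      ∀ E ∈ P, ∀ A ∈ V.powersetCard k, E ⊆ A → A ∈ F := by
  rw [← smul_eq_mul, ← sum_const, sum_eq_sum_iff_of_le fun E hE =>
    Nat.pow_le_pow_left (deg_le_of_mem_powersetCard hF hk (hP hE)) 2]
  refine forall₂_congr fun E hE => ?_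
  rw [pow_left_inj₀ (Nat.zero_le _) (Nat.zero_le _) two_ne_zero,
    deg_eq_iff_forall_mem hF hk hkV (hP hE)]

theorem sum_sq_deg_star_eq_iff (hF : F ⊆ V.powersetCard k) (hk : 2 ≤ k) (hkV : k ≤ #V) (v : α) :
    ∑ E ∈ V.powersetCard (k - 1) with v ∈ E, deg F E ^ 2 =
        #{E ∈ V.powersetCard (k - 1) | v ∈ E} * (#V - k + 1) ^ 2 ↔
      {A ∈ V.powersetCard k | v ∈ A} ⊆ F := by
  rw [sum_sq_deg_eq_iff_forall_mem hF (by omega) hkV (filter_subset _ _)]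
  constructor
  · intro h A hA
    obtain ⟨hAVk, hvA⟩ := mem_filter.1 hA
    obtain ⟨hAV, hAk⟩ := mem_powersetCard.1 hAVk
    obtain ⟨x, hxA, hxv⟩ := exists_mem_ne (by omega : 1 < #A) v
    refine h (A.erase x) (mem_filter.2 ⟨mem_powersetCard.2 ⟨(erase_subset x A).trans hAV, ?_⟩,
      mem_erase.2 ⟨hxv.symm, hvA⟩⟩) A hAVk (erase_subset x A)
    rw [card_erase_of_mem hxA, hAk]
  · intro h E hE A hA hEA
    exact h (mem_filter.2 ⟨hA, hEA (mem_filter.1 hE).2⟩)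

/-- In `G` every `(k-1)`-set through `v` has the maximal degree `n - k + 1`, and every other
`(k-1)`-set `E` gains exactly one from `insert v E`, whereas in `F` it gains at most one. -/
theorem co2_le_co2_of_star_subset {G : Finset (Finset α)} (hF : F ⊆ V.powersetCard k)
    (hG : G ⊆ V.powersetCard k) (hk : 2 ≤ k) (hkV : k ≤ #V) {v : α} (hv : v ∈ V)
    (hGv : {A ∈ V.powersetCard k | v ∈ A} ⊆ G)
    (hcard : #{A ∈ F | v ∉ A} ≤ #{A ∈ G | v ∉ A})
    (hco2 : co2 (V.erase v) k {A ∈ F | v ∉ A} ≤ co2 (V.erase v) k {A ∈ G | v ∉ A}) :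
    co2 V k F ≤ co2 V k G ∧
      (co2 V k F = co2 V k G →
        co2 (V.erase v) k {A ∈ F | v ∉ A} = co2 (V.erase v) k {A ∈ G | v ∉ A} ∧
          {A ∈ V.powersetCard k | v ∈ A} ⊆ F) := by
  have hstarF := sum_sq_deg_le hF (by omega) (filter_subset (v ∈ ·) (V.powersetCard (k - 1)))
  have hstarG := (sum_sq_deg_star_eq_iff hG hk hkV v).2 hGv
  have hrestF := sum_sq_deg_erase_le hF (by omega) v
  have hrestG := sum_sq_deg_erase_eq hG (by omega) v fun E hE => by
    obtain ⟨hEV, hEk⟩ := mem_powersetCard.1 hE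
    refine hGv (mem_filter.2 ⟨mem_powersetCard.2
      ⟨insert_subset hv (hEV.trans (erase_subset v V)), ?_⟩, mem_insert_self v E⟩)
    rw [card_insert_of_notMem fun h => notMem_erase v V (hEV h), hEk]
    omega
  rw [sum_sq_deg_add_one (filter_notMem_subset_powersetCard_erase hF v) (by omega)] at hrestF
  rw [sum_sq_deg_add_one (filter_notMem_subset_powersetCard_erase hG v) (by omega)] at hrestG
  have := Nat.mul_le_mul_left k hcard
  rw [co2_eq_sum_mem_add_sum_erase v, co2_eq_sum_mem_add_sum_erase (F := G) v]
  exact ⟨by omega, fun h => ⟨by omega, (sum_sq_deg_star_eq_iff hF hk hkV v).1 (by omega)⟩⟩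

end Degree

section Hitting

variable {V S : Finset α} {k : ℕ}

theorem hitting_subset : hitting V k S ⊆ V.powersetCard k := filter_subset _ _

theorem filter_not_nonempty_inter (V S : Finset α) (k : ℕ) :
    {A ∈ V.powersetCard k | ¬(A ∩ S).Nonempty} = (V \ S).powersetCard k := by
  ext A
  simp only [mem_filter, mem_powersetCard, not_nonempty_iff_eq_empty,
    ← disjoint_iff_inter_eq_empty, subset_sdiff]
  tauto

theorem card_hitting (hS : S ⊆ V) : #(hitting V k S) = (#V).choose k - (#V - #S).choose k := by
  have := card_filter_add_card_filter_not (s := V.powersetCard k) fun A => (A ∩ S).Nonempty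
  rw [filter_not_nonempty_inter, card_powersetCard, card_powersetCard,
    card_sdiff_of_subset hS] at this
  rw [hitting]
  omega

theorem deg_hitting_of_disjoint (hS : S ⊆ V) {E : Finset α} (hEV : E ⊆ V) (hES : Disjoint E S)
    (hEk : #E + 1 = k) : deg (hitting V k S) E = #S := by
  have hxE : ∀ x ∈ S, x ∉ E := fun x hx => disjoint_right.1 hES hx
  have : {A ∈ hitting V k S | E ⊆ A} = S.image (insert · E) := by
    ext A
    simp only [hitting, mem_filter, mem_powersetCard, mem_image]
    constructor
    · rintro ⟨⟨⟨-, hAk⟩, x, hx⟩, hEA⟩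
      rw [mem_inter] at hx
      refine ⟨x, hx.2, eq_of_subset_of_card_le (insert_subset hx.1 hEA) ?_⟩
      rw [hAk, card_insert_of_notMem (hxE x hx.2), hEk]
    · rintro ⟨x, hxS, rfl⟩
      refine ⟨⟨⟨insert_subset (hS hxS) hEV, ?_⟩, x, mem_inter.2 ⟨mem_insert_self x E, hxS⟩⟩,
        subset_insert x E⟩
      rw [card_insert_of_notMem (hxE x hxS), hEk]
  rw [deg, this, card_image_of_injOn fun x hx y _ hxy => (insert_inj (hxE x hx)).1 hxy]

theorem co2_hitting (hS : S ⊆ V) (hk : 1 ≤ k) (hkV : k ≤ #V) :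
    co2 V k (hitting V k S) = co2Max #V k #S := by
  have hmeet : ∀ E ∈ {E ∈ V.powersetCard (k - 1) | (E ∩ S).Nonempty},
      deg (hitting V k S) E ^ 2 = (#V - k + 1) ^ 2 := fun E hE => by
    rw [(deg_eq_iff_forall_mem hitting_subset hk hkV (mem_filter.1 hE).1).2 fun A hA hEA =>
      mem_filter.2 ⟨hA, (mem_filter.1 hE).2.mono (inter_subset_inter_right hEA)⟩]
  have hmiss : ∀ E ∈ {E ∈ V.powersetCard (k - 1) | ¬(E ∩ S).Nonempty},
      deg (hitting V k S) E ^ 2 = #S ^ 2 := fun E hE => by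
    obtain ⟨hEVk, hES⟩ := mem_filter.1 hE
    obtain ⟨hEV, hEk⟩ := mem_powersetCard.1 hEVk
    rw [deg_hitting_of_disjoint hS hEV
      (disjoint_iff_inter_eq_empty.2 (not_nonempty_iff_eq_empty.1 hES)) (by omega)]
  have hcard := card_hitting (k := k - 1) hS
  rw [hitting] at hcard
  rw [co2, ← sum_filter_add_sum_filter_not _ fun E => (E ∩ S).Nonempty, sum_congr rfl hmeet,
    sum_congr rfl hmiss, sum_const, sum_const, hcard, filter_not_nonempty_inter, card_powersetCard,
    card_sdiff_of_subset hS, co2Max, smul_eq_mul, smul_eq_mul]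
  ring

theorem star_subset_hitting_insert (v : α) (T : Finset α) :
    {A ∈ V.powersetCard k | v ∈ A} ⊆ hitting V k (insert v T) := fun _ hA =>
  mem_filter.2 ⟨(mem_filter.1 hA).1, v, mem_inter.2 ⟨(mem_filter.1 hA).2, mem_insert_self v T⟩⟩

theorem filter_notMem_hitting_insert {v : α} {T : Finset α} :
    {A ∈ hitting V k (insert v T) | v ∉ A} = hitting (V.erase v) k T := by
  ext A
  simp only [hitting, mem_filter, mem_powersetCard, subset_erase]
  by_cases hvA : v ∈ A
  · tauto
  · simp only [inter_insert_of_notMem hvA]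
    tauto

theorem eq_hitting_insert {F : Finset (Finset α)} (hF : F ⊆ V.powersetCard k) {v : α}
    {T : Finset α} (hstar : {A ∈ V.powersetCard k | v ∈ A} ⊆ F)
    (hrest : {A ∈ F | v ∉ A} = hitting (V.erase v) k T) : F = hitting V k (insert v T) := by
  ext A
  by_cases hvA : v ∈ A
  · exact ⟨fun hA => star_subset_hitting_insert v T (mem_filter.2 ⟨hF hA, hvA⟩),
      fun hA => hstar (mem_filter.2 ⟨hitting_subset hA, hvA⟩)⟩
  · have hF' : A ∈ F ↔ A ∈ {B ∈ F | v ∉ B} := by simp [hvA]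
    have hG' : A ∈ hitting V k (insert v T) ↔ A ∈ {B ∈ hitting V k (insert v T) | v ∉ B} := by
      simp [hvA]
    rw [hF', hG', hrest, filter_notMem_hitting_insert]

theorem hitting_one (hS : S ⊆ V) :
    hitting V 1 S = S.map ⟨singleton, singleton_injective⟩ := by
  ext A
  simp only [hitting, powersetCard_one, mem_filter, mem_map, Function.Embedding.coeFn_mk]
  constructor
  · rintro ⟨⟨a, -, rfl⟩, x, hx⟩
    rw [mem_inter, mem_singleton] at hx
    exact ⟨a, hx.1 ▸ hx.2, rfl⟩
  · rintro ⟨a, ha, rfl⟩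
    exact ⟨⟨a, hS ha, rfl⟩, a, mem_inter.2 ⟨mem_singleton_self a, ha⟩⟩

end Hitting

section Matching

variable {F : Finset (Finset α)} {s k : ℕ}

theorem MatchingNumberLE.eq_empty (h : MatchingNumberLE F 0) : F = ∅ := by
  by_contra hF
  obtain ⟨A, hA⟩ := nonempty_iff_ne_empty.2 hF
  simpa using h {A} (singleton_subset_iff.2 hA) (by simp)

theorem pairwise_disjoint_insert {M : Finset (Finset α)} {A : Finset α}
    (hM : (M : Set (Finset α)).Pairwise Disjoint) (hA : ∀ B ∈ M, Disjoint A B) :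
    ((insert A M : Finset (Finset α)) : Set (Finset α)).Pairwise Disjoint := by
  rw [coe_insert, Set.pairwise_insert_of_symm]
  exact ⟨hM, fun B hB _ => hA B hB⟩

/-- The union of a maximal matching meets every member of `F`. -/
theorem MatchingNumberLE.exists_cover (h : MatchingNumberLE F s)
    (hF : (F : Set (Finset α)).Sized k) (hk : 1 ≤ k) :
    ∃ W : Finset α, #W ≤ s * k ∧ ∀ A ∈ F, ¬Disjoint A W := by
  obtain ⟨M, hMmax⟩ := exists_maximal
    (s := {M ∈ F.powerset | ∀ A ∈ M, ∀ B ∈ M, A ≠ B → Disjoint A B}) ⟨∅, by simp⟩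
  obtain ⟨hMF, hM⟩ := mem_filter.1 hMmax.1
  rw [mem_powerset] at hMF
  refine ⟨M.biUnion id, ?_, fun A hA hAW => ?_⟩
  · calc #(M.biUnion id) ≤ #M * k := card_biUnion_le_card_mul _ _ _ fun B hB => (hF (hMF hB)).le
      _ ≤ s * k := Nat.mul_le_mul_right k (h M hMF hM)
  · rw [disjoint_biUnion_right] at hAW
    have hAM : A ∉ M := fun hAM => by
      have := hF hA
      rw [(disjoint_self_iff_empty A).1 (hAW A hAM), card_empty] at this
      omega
    exact hAM <| hMmax.2 (mem_filter.2 ⟨mem_powerset.2 (insert_subset hA hMF),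
      pairwise_disjoint_insert hM hAW⟩) (subset_insert A M) (mem_insert_self A M)

theorem MatchingNumberLE.card_le_of_forall_deg_le (h : MatchingNumberLE F s)
    (hF : (F : Set (Finset α)).Sized k) (hk : 1 ≤ k) {D : ℕ} (hD : ∀ v, deg F {v} ≤ D) :
    #F ≤ s * k * D := by
  obtain ⟨W, hW, hcov⟩ := h.exists_cover hF hk
  calc #F ≤ #(W.biUnion fun w => {A ∈ F | {w} ⊆ A}) := card_le_card fun A hA => by
          obtain ⟨w, hwA, hwW⟩ := not_disjoint_iff.1 (hcov A hA)
          exact mem_biUnion.2 ⟨w, hwW, mem_filter.2 ⟨hA, singleton_subset_iff.2 hwA⟩⟩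
    _ ≤ #W * D := card_biUnion_le_card_mul _ _ _ fun w _ => hD w
    _ ≤ s * k * D := Nat.mul_le_mul_right D hW

theorem exists_mem_disjoint_of_lt_deg {V : Finset α} (hF : F ⊆ V.powersetCard k) (hk : 2 ≤ k)
    {v : α} {W : Finset α} (hvW : v ∉ W) (hdeg : #W * (#V - 2).choose (k - 2) < deg F {v}) :
    ∃ A ∈ F, v ∈ A ∧ Disjoint A W := by
  by_contra! hcon
  refine hdeg.not_ge ?_
  calc deg F {v} ≤ #(W.biUnion fun u => {A ∈ F | {v, u} ⊆ A}) := card_le_card fun A hA => by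
          obtain ⟨hAF, hvA⟩ := mem_filter.1 hA
          rw [singleton_subset_iff] at hvA
          obtain ⟨u, huA, huW⟩ := not_disjoint_iff.1 (hcon A hAF hvA)
          exact mem_biUnion.2 ⟨u, huW, mem_filter.2 ⟨hAF, insert_subset hvA
            (singleton_subset_iff.2 huA)⟩⟩
    _ ≤ #W * (#V - 2).choose (k - 2) := card_biUnion_le_card_mul _ _ _ fun u hu => by
          have hvu : v ≠ u := fun h => hvW (h ▸ hu)
          have := deg_le_choose hF (E := {v, u}) (by rw [card_pair hvu]; omega)
          rwa [card_pair hvu] at this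

/-- A matching of `s + 1` sets avoiding `v` spans at most `(s + 1) k` vertices, and the sets
through `v` meeting them are too few to exhaust the degree of `v`. -/
theorem MatchingNumberLE.filter_notMem {V : Finset α} (h : MatchingNumberLE F (s + 1))
    (hF : F ⊆ V.powersetCard k) (hk : 2 ≤ k) {v : α}
    (hv : (s + 1) * k * (#V - 2).choose (k - 2) < deg F {v}) :
    MatchingNumberLE {A ∈ F | v ∉ A} s := by
  intro M hMF hM
  by_contra! hs
  obtain ⟨M₀, hM₀M, hM₀⟩ := exists_subset_card_eq (show s + 1 ≤ #M from hs)
  have hM₀F : ∀ ⦃B⦄, B ∈ M₀ → B ∈ F ∧ v ∉ B := fun B hB => mem_filter.1 (hMF (hM₀M hB))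
  have hW : #(M₀.biUnion id) ≤ (s + 1) * k := hM₀ ▸ card_biUnion_le_card_mul _ _ _ fun B hB =>
    (mem_powersetCard.1 (hF (hM₀F hB).1)).2.le
  have hvW : v ∉ M₀.biUnion id := by
    simp only [mem_biUnion, id, not_exists, not_and]
    exact fun B hB => (hM₀F hB).2
  obtain ⟨A, hAF, hvA, hAW⟩ := exists_mem_disjoint_of_lt_deg hF hk hvW
    (lt_of_le_of_lt (Nat.mul_le_mul_right _ hW) hv)
  have hAM₀ : A ∉ M₀ := fun hA => (hM₀F hA).2 hvA
  have := h (insert A M₀) (insert_subset hAF fun B hB => (hM₀F hB).1)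
    (pairwise_disjoint_insert (hM.mono (coe_subset.2 hM₀M)) ((disjoint_biUnion_right _ _ _).1 hAW))
  rw [card_insert_of_notMem hAM₀, hM₀] at this
  omega

end Matching

/-- The `n₀(k, s)` of the theorem. -/
def threshold (k s : ℕ) : ℕ := (s * k) ^ 2 * k + 2 * k + s

theorem threshold_succ (k s : ℕ) : threshold k s + 1 ≤ threshold k (s + 1) := by
  unfold threshold
  have : (s * k) ^ 2 * k ≤ ((s + 1) * k) ^ 2 * k := by gcongr; omega
  omega

section Main

variable {V : Finset α} {F : Finset (Finset α)} {k : ℕ}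

theorem card_le_of_matchingNumberLE (hk : 2 ≤ k) (s : ℕ) (hn : threshold k s ≤ #V)
    (hF : F ⊆ V.powersetCard k) (hm : MatchingNumberLE F s) :
    #F ≤ (#V).choose k - (#V - s).choose k := by
  induction s generalizing V F with
  | zero => simp [hm.eq_empty]
  | succ s ih =>
    have hnk : 2 * k + (s + 1) ≤ #V := le_trans (by unfold threshold; omega) hn
    by_cases hhigh : ∃ v, (s + 1) * k * (#V - 2).choose (k - 2) < deg F {v}
    · obtain ⟨v, hv⟩ := hhigh
      have hvV : v ∈ V := mem_of_deg_pos hF (by omega)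
      have hV' : #(V.erase v) = #V - 1 := card_erase_of_mem hvV
      have hF' := ih (V := V.erase v) (by have := threshold_succ k s; omega)
        (filter_notMem_subset_powersetCard_erase hF v) (hm.filter_notMem hF hk hv)
      have hdeg := deg_le_choose hF (E := {v}) (by rw [card_singleton]; omega)
      have hsplit := card_filter_add_card_filter_not (s := F) (v ∈ ·)
      have := Nat.choose_eq_choose_pred_add (n := #V) (k := k) (by omega) (by omega)
      have := Nat.choose_le_choose k (show #V - (s + 1) ≤ #V - 1 by omega)
      simp only [deg, singleton_subset_iff, card_singleton] at hdeg
      rw [hV', show #V - 1 - s = #V - (s + 1) by omega] at hF'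
      omega
    · push Not at hhigh
      have hsmall := hm.card_le_of_forall_deg_le
        ((Set.sized_powersetCard V k).mono (coe_subset.2 hF)) (by omega) hhigh
      have hspread := mul_choose_le_choose (a := ((s + 1) * k) ^ 2) (n := #V) (by omega) hk (by
          unfold threshold at hn
          have := Nat.mul_le_mul_left (((s + 1) * k) ^ 2) (Nat.sub_le k 1)
          omega)
      have := choose_pred_le_choose_sub_choose (n := #V) (k := k) (t := s + 1)
        (by omega) (by omega) (by omega)
      rw [← mul_assoc, ← sq] at hsmall
      omega

/-- Without a vertex of large degree, `F` is so small that `co₂(F) ≤ (n - k + 1) k |F|` is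
already below the bound. -/
theorem co2_lt_co2Max_of_forall_deg_le {s : ℕ} (hk : 2 ≤ k) (hn : threshold k (s + 1) ≤ #V)
    (hF : F ⊆ V.powersetCard k) (hm : MatchingNumberLE F (s + 1))
    (hlow : ∀ v, deg F {v} ≤ (s + 1) * k * (#V - 2).choose (k - 2)) :
    co2 V k F < co2Max #V k (s + 1) := by
  unfold threshold at hn
  have hsmall := hm.card_le_of_forall_deg_le
    ((Set.sized_powersetCard V k).mono (coe_subset.2 hF)) (by omega) hlow
  rw [← mul_assoc, ← sq] at hsmall
  have hC : 0 < (#V - 2).choose (k - 2) := Nat.choose_pos (by omega)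
  have hCle : (#V - 2).choose (k - 2) ≤ (#V).choose (k - 1) - (#V - (s + 1)).choose (k - 1) := by
    have := choose_pred_le_choose_sub_choose (n := #V) (k := k - 1) (t := s + 1)
      (by omega) (by omega) (by omega)
    rw [show k - 1 - 1 = k - 2 by omega] at this
    exact (Nat.choose_le_choose _ (by omega)).trans this
  calc co2 V k F ≤ (#V - k + 1) * (k * #F) := co2_le_mul_card hF (by omega)
    _ ≤ (#V - k + 1) * (((s + 1) * k) ^ 2 * k * (#V - 2).choose (k - 2)) := by
        rw [mul_comm k, mul_right_comm]; gcongr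
    _ < (#V - k + 1) * ((#V - k + 1) * (#V - 2).choose (k - 2)) := by
        gcongr
        omega
    _ ≤ (#V - k + 1) ^ 2 * ((#V).choose (k - 1) - (#V - (s + 1)).choose (k - 1)) := by
        rw [sq, mul_assoc]; gcongr
    _ ≤ co2Max #V k (s + 1) := Nat.le_add_left _ _

/-- Compare `F` at `v` with `B(V, k, T ∪ {v})` for an arbitrary `s`-set `T ⊆ V \ {v}`. -/
theorem co2_le_co2Max_succ_of_erase {s : ℕ} (hk : 2 ≤ k) (hF : F ⊆ V.powersetCard k) {v : α}
    (hv : v ∈ V) (hsV : s < #V) (hkV : k < #V)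
    (hcard : #{A ∈ F | v ∉ A} ≤ (#(V.erase v)).choose k - (#(V.erase v) - s).choose k)
    (hle : co2 (V.erase v) k {A ∈ F | v ∉ A} ≤ co2Max #(V.erase v) k s)
    (heq : co2 (V.erase v) k {A ∈ F | v ∉ A} = co2Max #(V.erase v) k s →
      ∃ T ⊆ V.erase v, #T = s ∧ {A ∈ F | v ∉ A} = hitting (V.erase v) k T) :
    co2 V k F ≤ co2Max #V k (s + 1) ∧
      (co2 V k F = co2Max #V k (s + 1) → ∃ S ⊆ V, #S = s + 1 ∧ F = hitting V k S) := by
  have hV' : #(V.erase v) = #V - 1 := card_erase_of_mem hv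
  have hinsert : ∀ T ⊆ V.erase v, insert v T ⊆ V ∧ #(insert v T) = #T + 1 := fun T hT =>
    ⟨insert_subset hv (hT.trans (erase_subset v V)),
      card_insert_of_notMem fun h => notMem_erase v V (hT h)⟩
  obtain ⟨T, hTV, hT⟩ := exists_subset_card_eq (show s ≤ #(V.erase v) by omega)
  have hG := co2_hitting (hinsert T hTV).1 (by omega) hkV.le
  have hG' := co2_hitting hTV (by omega) (show k ≤ #(V.erase v) by omega)
  rw [(hinsert T hTV).2, hT] at hG
  rw [hT] at hG'
  obtain ⟨hcmp, hcmp_eq⟩ := co2_le_co2_of_star_subset hF hitting_subset hk hkV.le hv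
    (star_subset_hitting_insert v T)
    (by rw [filter_notMem_hitting_insert, card_hitting hTV, hT]; exact hcard)
    (by rw [filter_notMem_hitting_insert, hG']; exact hle)
  rw [hG] at hcmp hcmp_eq
  refine ⟨hcmp, fun h => ?_⟩
  obtain ⟨hrest, hstar⟩ := hcmp_eq h
  rw [filter_notMem_hitting_insert, hG'] at hrest
  obtain ⟨T', hT'V, hT', hF'⟩ := heq hrest
  exact ⟨insert v T', (hinsert T' hT'V).1, by rw [(hinsert T' hT'V).2, hT'],
    eq_hitting_insert hF hstar hF'⟩

theorem co2_le_co2Max (hk : 2 ≤ k) (s : ℕ) (hn : threshold k s ≤ #V)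
    (hF : F ⊆ V.powersetCard k) (hm : MatchingNumberLE F s) :
    co2 V k F ≤ co2Max #V k s ∧
      (co2 V k F = co2Max #V k s ↔ ∃ S ⊆ V, #S = s ∧ F = hitting V k S) := by
  induction s generalizing V F with
  | zero =>
    obtain rfl := hm.eq_empty
    simp [co2, deg, co2Max, hitting]
  | succ s ih =>
    have hnk : 2 * k + (s + 1) ≤ #V := le_trans (by unfold threshold; omega) hn
    suffices co2 V k F ≤ co2Max #V k (s + 1) ∧
        (co2 V k F = co2Max #V k (s + 1) → ∃ S ⊆ V, #S = s + 1 ∧ F = hitting V k S) from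
      ⟨this.1, this.2, fun ⟨S, hSV, hS, hFS⟩ => hFS ▸ hS ▸ co2_hitting hSV (by omega) (by omega)⟩
    by_cases hhigh : ∃ v, (s + 1) * k * (#V - 2).choose (k - 2) < deg F {v}
    · obtain ⟨v, hv⟩ := hhigh
      have hvV : v ∈ V := mem_of_deg_pos hF (by omega)
      have hn' : threshold k s ≤ #(V.erase v) := by
        rw [card_erase_of_mem hvV]; have := threshold_succ k s; omega
      have hF' := filter_notMem_subset_powersetCard_erase hF v
      have hm' := hm.filter_notMem hF hk hv
      obtain ⟨hle, hiff⟩ := ih hn' hF' hm'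
      exact co2_le_co2Max_succ_of_erase hk hF hvV (by omega) (by omega)
        (card_le_of_matchingNumberLE hk s hn' hF' hm') hle hiff.1
    · push Not at hhigh
      have hlt := co2_lt_co2Max_of_forall_deg_le hk hn hF hm hhigh
      exact ⟨hlt.le, fun h => absurd h hlt.ne⟩

/-- For `k = 1` the family is a set of singletons, hence itself a matching. -/
theorem co2_le_co2Max_one {s : ℕ} (hF : F ⊆ V.powersetCard 1) (hm : MatchingNumberLE F s) :
    co2 V 1 F ≤ co2Max #V 1 s ∧
      (co2 V 1 F = co2Max #V 1 s ↔ ∃ S ⊆ V, #S = s ∧ F = hitting V 1 S) := by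
  rw [powersetCard_one, subset_map_iff] at hF
  obtain ⟨T, hTV, rfl⟩ := hF
  have hco2 : co2 V 1 (T.map ⟨singleton, singleton_injective⟩) = #T ^ 2 := by
    simp [co2, deg]
  have hT : #T ≤ s := by
    rw [← card_map ⟨singleton, singleton_injective⟩]
    refine hm _ subset_rfl fun A hA B hB hAB => ?_
    obtain ⟨a, -, rfl⟩ := mem_map.1 hA
    obtain ⟨b, -, rfl⟩ := mem_map.1 hB
    exact disjoint_singleton.2 fun h => hAB (h ▸ rfl)
  rw [hco2, show co2Max #V 1 s = s ^ 2 by simp [co2Max],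
    pow_left_inj₀ (Nat.zero_le _) (Nat.zero_le _) two_ne_zero]
  refine ⟨Nat.pow_le_pow_left hT 2, ⟨fun h => ⟨T, hTV, h, (hitting_one hTV).symm⟩, ?_⟩⟩
  rintro ⟨S, hSV, rfl, hTS⟩
  rw [hitting_one hSV, map_inj] at hTS
  rw [hTS]

end Main

end ErdosMatching

open ErdosMatching

theorem emc_l2_general (k s : ℕ) (hk : 1 ≤ k) :
    ∃ n₀ : ℕ, ∀ n : ℕ, n₀ ≤ n → ∀ F : Finset (Finset (Fin n)),
      (∀ A ∈ F, A.card = k) →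
      (∀ M ⊆ F, (∀ A ∈ M, ∀ B ∈ M, A ≠ B → Disjoint A B) → M.card ≤ s) →
      ((∑ E ∈ Finset.univ.powersetCard (k - 1), ((F.filter fun A => E ⊆ A).card) ^ 2 ≤
          s ^ 2 * (n - s).choose (k - 1)
            + (n - k + 1) ^ 2 * (n.choose (k - 1) - (n - s).choose (k - 1))) ∧
        ((∑ E ∈ Finset.univ.powersetCard (k - 1), ((F.filter fun A => E ⊆ A).card) ^ 2 =
            s ^ 2 * (n - s).choose (k - 1)
              + (n - k + 1) ^ 2 * (n.choose (k - 1) - (n - s).choose (k - 1))) ↔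
          ∃ S : Finset (Fin n), S.card = s ∧
            F = (Finset.univ.powersetCard k).filter fun A => (A ∩ S).Nonempty)) := by
  refine ⟨threshold k s, fun n hn F hF hm => ?_⟩
  have hFV : F ⊆ univ.powersetCard k := fun A hA => mem_powersetCard.2 ⟨subset_univ A, hF A hA⟩
  have key : co2 univ k F ≤ co2Max n k s ∧
      (co2 univ k F = co2Max n k s ↔
        ∃ S ⊆ univ, #S = s ∧ F = hitting univ k S) := by
    rcases hk.eq_or_lt with rfl | hk2
    · simpa using co2_le_co2Max_one hFV hm
    · simpa using co2_le_co2Max hk2 s (by simpa using hn) hFV hm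
  simp only [subset_univ, true_and] at key
  exact key

/-- Erdős Matching Conjecture in the ℓ₂-norm: for fixed `k, s ≥ 1` and `n` large enough,
every family `F` of `k`-subsets of `[n]` with matching number at most `s` satisfies
`co₂(F) ≤ co₂(B(n,k,s)) = s²·C(n-s,k-1) + (n-k+1)²·(C(n,k-1) − C(n-s,k-1))`,
with equality iff `F` is isomorphic to `B(n,k,s)`, i.e. `F` consists of all `k`-sets
meeting a fixed `s`-set. -/
theorem emc_l2 (k s : ℕ) (hk : 1 ≤ k) (hs : 1 ≤ s) :
    ∃ n₀ : ℕ, ∀ n : ℕ, n₀ ≤ n → ∀ F : Finset (Finset (Fin n)),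
      (∀ A ∈ F, A.card = k) →
      (∀ M ⊆ F, (∀ A ∈ M, ∀ B ∈ M, A ≠ B → Disjoint A B) → M.card ≤ s) →
      ((∑ E ∈ Finset.univ.powersetCard (k - 1), ((F.filter fun A => E ⊆ A).card) ^ 2 ≤
          s ^ 2 * (n - s).choose (k - 1)
            + (n - k + 1) ^ 2 * (n.choose (k - 1) - (n - s).choose (k - 1))) ∧
        ((∑ E ∈ Finset.univ.powersetCard (k - 1), ((F.filter fun A => E ⊆ A).card) ^ 2 =
            s ^ 2 * (n - s).choose (k - 1)
              + (n - k + 1) ^ 2 * (n.choose (k - 1) - (n - s).choose (k - 1))) ↔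
          ∃ S : Finset (Fin n), S.card = s ∧
            F = (Finset.univ.powersetCard k).filter fun A => (A ∩ S).Nonempty)) :=
  emc_l2_general k s hk
end

section
/- For all integers k ≥ 3 and all sufficiently large n, every k-uniform hypergraph H on [n] containing no minimal 3-path satisfies co₂(H) ≤ C(n-1,k-1)·(1 + (n-k+1)(k-1)), with equality only if H is a star. -/
/-
Split `H` along its disjoint pairs of edges. If `A, B ∈ H` are disjoint, freeness from minimal
3-paths forces every edge meeting `A` to be disjoint from every edge missing `A`; hence `H` falls
apart into vertex-disjoint pieces over which `co₂` is additive. Each piece is either a star (then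
`co₂` is at most that of the full star on its vertices), or intersecting but not a star on at least
`k³ + k` vertices (a Hilton–Milner type count `|H| ≤ k² C(m-2, k-2)` makes `co₂` strictly smaller
than for the full star), or lives on fewer than `k³ + k` vertices (then `co₂` is bounded by a
constant). The value of `co₂` on the full star of an `m`-set is superadditive in `m` and its
increments grow linearly, so for large `n` the pieces together stay below the full star on `[n]`,
strictly unless `H` is that star.
-/

open Finset

namespace MinimalThreePath

/-- `co₂` of the full star of `k`-subsets of an `m`-set through a fixed vertex: the
`C(m-1, k-2)` sets of size `k - 1` through the centre have codegree `m - k + 1`, the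
`C(m-1, k-1)` ones avoiding it have codegree `1`. -/
def starCo2 (k m : ℕ) : ℕ := (m - 1).choose (k - 1) * (1 + (m - k + 1) * (k - 1))

section StarCo2

variable {k : ℕ}

theorem choose_pred_mul_pred (hk : 2 ≤ k) {m : ℕ} (hm : k ≤ m) :
    (m - 1).choose (k - 1) * (k - 1) = (m - 1).choose (k - 2) * (m - k + 1) := by
  have h := Nat.choose_succ_right_eq (m - 1) (k - 2)
  rwa [show k - 2 + 1 = k - 1 by omega, show m - 1 - (k - 2) = m - k + 1 by omega] at h

theorem starCo2_eq (hk : 2 ≤ k) {m : ℕ} (hm : k ≤ m) :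
    starCo2 k m = (m - 1).choose (k - 1) + (m - 1).choose (k - 2) * (m - k + 1) ^ 2 := by
  calc starCo2 k m = (m - 1).choose (k - 1) + (m - 1).choose (k - 1) * (k - 1) * (m - k + 1) := by
        unfold starCo2; ring
    _ = _ := by rw [choose_pred_mul_pred hk hm]; ring

theorem starCo2_of_lt (hk : 2 ≤ k) {m : ℕ} (hm : m < k) : starCo2 k m = 0 := by
  simp [starCo2, Nat.choose_eq_zero_of_lt (show m - 1 < k - 1 by omega)]

theorem starCo2_mono (k : ℕ) : Monotone (starCo2 k) := fun a b hab =>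
  Nat.mul_le_mul (Nat.choose_le_choose _ (by omega))
    (Nat.add_le_add_left (Nat.mul_le_mul_right _ (by omega)) 1)

theorem sq_le_starCo2 (hk : 2 ≤ k) {m : ℕ} (hm : k ≤ m) : (m - k + 1) ^ 2 ≤ starCo2 k m := by
  have : 1 ≤ (m - 1).choose (k - 2) := Nat.choose_pos (by omega)
  rw [starCo2_eq hk hm]
  nlinarith

theorem starCo2_add_le_succ (hk : 2 ≤ k) {m : ℕ} (hm : k ≤ m) :
    starCo2 k m + (m - k + 1) ≤ starCo2 k (m + 1) := by
  have h₁ := Nat.choose_le_choose (k - 1) (show m - 1 ≤ m by omega)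
  have h₂ := Nat.choose_le_choose (k - 2) (show m - 1 ≤ m by omega)
  have h₃ : 1 ≤ (m - 1).choose (k - 2) := Nat.choose_pos (by omega)
  rw [starCo2_eq hk hm, starCo2_eq hk (by omega), show m + 1 - 1 = m by omega,
    show m + 1 - k + 1 = m - k + 1 + 1 by omega]
  nlinarith

theorem starCo2_add_lt (hk : 2 ≤ k) {a b : ℕ} (ha : k ≤ a) (hb : k ≤ b) :
    starCo2 k a + starCo2 k b < starCo2 k (a + b) := by
  have hA := Nat.choose_le_choose (k - 1) (show a - 1 ≤ a + b - 1 by omega)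
  have hA' := Nat.choose_le_choose (k - 2) (show a - 1 ≤ a + b - 1 by omega)
  have hB' := Nat.choose_le_choose (k - 2) (show b - 1 ≤ a + b - 1 by omega)
  have hpos : 1 ≤ (a + b - 1).choose (k - 2) := Nat.choose_pos (by omega)
  have hid := choose_pred_mul_pred hk hb
  have hB : (b - 1).choose (k - 1) ≤ (b - 1).choose (k - 2) * (b - k + 1) :=
    hid ▸ Nat.le_mul_of_pos_right _ (by omega)
  rw [starCo2_eq hk ha, starCo2_eq hk hb, starCo2_eq hk (by omega),
    show a + b - k + 1 = (a - k + 1) + (b - k + 1) + (k - 1) by omega]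
  generalize a - k + 1 = x, b - k + 1 = y at *
  have hsq : x ^ 2 + y ^ 2 + y + 1 ≤ (x + y + (k - 1)) ^ 2 := by
    have : x + y + 1 ≤ x + y + (k - 1) := by omega
    nlinarith
  nlinarith [Nat.mul_le_mul_left ((a + b - 1).choose (k - 2)) hsq,
    Nat.mul_le_mul_right (x ^ 2) hA', Nat.mul_le_mul_right (y ^ 2) hB',
    Nat.mul_le_mul_right y hB']

theorem starCo2_add_le (hk : 2 ≤ k) (a b : ℕ) : starCo2 k a + starCo2 k b ≤ starCo2 k (a + b) := by
  rcases lt_or_ge a k with ha | ha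
  · rw [starCo2_of_lt hk ha, zero_add]; exact starCo2_mono k (by omega)
  rcases lt_or_ge b k with hb | hb
  · rw [starCo2_of_lt hk hb, add_zero]; exact starCo2_mono k (by omega)
  exact (starCo2_add_lt hk ha hb).le

theorem exists_starCo2_add_lt (hk : 2 ≤ k) {c x₁ x₂ m₁ m₂ : ℕ}
    (h₁ : (x₁ ≤ starCo2 k m₁ ∧ k ≤ m₁) ∨ ∃ s t, t + s ≤ m₁ ∧ x₁ < starCo2 k t + s * c)
    (h₂ : (x₂ ≤ starCo2 k m₂ ∧ k ≤ m₂) ∨ ∃ s t, t + s ≤ m₂ ∧ x₂ < starCo2 k t + s * c) :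
    ∃ s t, t + s ≤ m₁ + m₂ ∧ x₁ + x₂ < starCo2 k t + s * c := by
  rcases h₁ with ⟨h₁, hm₁⟩ | ⟨s₁, t₁, hst₁, h₁⟩ <;> rcases h₂ with ⟨h₂, hm₂⟩ | ⟨s₂, t₂, hst₂, h₂⟩
  · exact ⟨0, m₁ + m₂, by omega, by linarith [starCo2_add_lt hk hm₁ hm₂]⟩
  · exact ⟨s₂, m₁ + t₂, by omega, by linarith [starCo2_add_le hk m₁ t₂]⟩
  · exact ⟨s₁, t₁ + m₂, by omega, by linarith [starCo2_add_le hk t₁ m₂]⟩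
  · exact ⟨s₁ + s₂, t₁ + t₂, by omega, by linarith [starCo2_add_le hk t₁ t₂, add_mul s₁ s₂ c]⟩

theorem starCo2_add_mul_le (hk : 2 ≤ k) {c m : ℕ} (hm : c + k ≤ m) (u : ℕ) :
    starCo2 k m + u * c ≤ starCo2 k (m + u) := by
  induction u with
  | zero => simp
  | succ u ih =>
    have := starCo2_add_le_succ hk (m := m + u) (by omega)
    have hc : c ≤ m + u - k + 1 := by omega
    rw [← add_assoc, add_mul, one_mul]
    omega

theorem starCo2_add_mul_le_of_le (hk : 2 ≤ k) {c n s t : ℕ}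
    (hn : starCo2 k (c + k) + (k + 1) * c + k ≤ n) (hst : t + s ≤ n) :
    starCo2 k t + s * c ≤ starCo2 k n := by
  rcases le_or_gt (c + k) (n - s) with hs | hs
  · calc starCo2 k t + s * c ≤ starCo2 k (n - s) + s * c :=
          Nat.add_le_add_right (starCo2_mono k (by omega)) _
      _ ≤ starCo2 k (n - s + s) := starCo2_add_mul_le hk hs s
      _ = starCo2 k n := by rw [Nat.sub_add_cancel (by omega)]
  · have hx₀ : starCo2 k (c + k) + (k + 1) * c + 1 ≤ n - k + 1 := by omega
    calc starCo2 k t + s * c ≤ starCo2 k (c + k) + (n - k + 1 + k) * c :=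
          add_le_add (starCo2_mono k (by omega)) (Nat.mul_le_mul_right _ (by omega))
      _ ≤ (n - k + 1) ^ 2 := by
          generalize n - k + 1 = x at *
          have hx : 1 ≤ x := by omega
          nlinarith [Nat.mul_le_mul_left x hx₀, Nat.mul_le_mul_right (starCo2 k (c + k)) hx,
            Nat.mul_le_mul_right (k * c) hx]
      _ ≤ starCo2 k n := sq_le_starCo2 hk (by omega)

end StarCo2

variable {α : Type*}

theorem card_le_choose {H : Finset (Finset α)} {V : Finset α} {k : ℕ} (hV : ∀ A ∈ H, A ⊆ V)
    (hH : ∀ A ∈ H, #A = k) : #H ≤ (#V).choose k := by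
  rw [← card_powersetCard]
  exact card_le_card fun A hA => mem_powersetCard.2 ⟨hV A hA, hH A hA⟩

variable [DecidableEq α]

theorem card_le_card_sup_id {H : Finset (Finset α)} {A : Finset α} (hA : A ∈ H) :
    #A ≤ #(H.sup id) :=
  card_le_card (le_sup (f := id) hA)

theorem sum_powersetCard_succ_insert {β : Type*} [AddCommMonoid β] {v : α} {W : Finset α}
    (hvW : v ∉ W) (j : ℕ) (f : Finset α → β) :
    ∑ E ∈ (insert v W).powersetCard (j + 1), f E =
      ∑ E ∈ W.powersetCard (j + 1), f E + ∑ F ∈ W.powersetCard j, f (insert v F) := by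
  have hnotMem : ∀ F ∈ W.powersetCard j, v ∉ F := fun F hF h => hvW ((mem_powersetCard.1 hF).1 h)
  rw [powersetCard_succ_insert hvW, sum_union, sum_image]
  · exact fun F₁ h₁ F₂ h₂ h => by
      rw [← erase_insert (hnotMem F₁ h₁), h, erase_insert (hnotMem F₂ h₂)]
  · refine disjoint_left.2 fun E hE hE' => ?_
    obtain ⟨F, -, rfl⟩ := mem_image.1 hE'
    exact hvW ((mem_powersetCard.1 hE).1 (mem_insert_self v F))

def codegree (H : Finset (Finset α)) (E : Finset α) : ℕ := #{A ∈ H | E ⊆ A}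

def co2 [Fintype α] (k : ℕ) (H : Finset (Finset α)) : ℕ :=
  ∑ E ∈ univ.powersetCard (k - 1), codegree H E ^ 2

def fullStar [Fintype α] (k : ℕ) (v : α) : Finset (Finset α) := {A ∈ univ.powersetCard k | v ∈ A}

@[simp]
theorem mem_fullStar [Fintype α] {k : ℕ} {v : α} {A : Finset α} :
    A ∈ fullStar k v ↔ #A = k ∧ v ∈ A := by
  simp [fullStar]

def MinPathFree (H : Finset (Finset α)) : Prop :=
  ¬ ∃ E₁ ∈ H, ∃ E₂ ∈ H, ∃ E₃ ∈ H,
    (E₁ ∩ E₂).Nonempty ∧ (E₂ ∩ E₃).Nonempty ∧ E₁ ∩ E₃ = ∅ ∧ E₁ ∩ E₂ ∩ E₃ = ∅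

theorem MinPathFree.mono {H H' : Finset (Finset α)} (h : H' ⊆ H) (hH : MinPathFree H) :
    MinPathFree H' :=
  fun ⟨E₁, h₁, E₂, h₂, E₃, h₃, hpath⟩ => hH ⟨E₁, h h₁, E₂, h h₂, E₃, h h₃, hpath⟩

theorem MinPathFree.disjoint {H : Finset (Finset α)} (hH : MinPathFree H) {A C D : Finset α}
    (hA : A ∈ H) (hC : C ∈ H) (hD : D ∈ H) (hAC : ¬ Disjoint A C) (hAD : Disjoint A D) :
    Disjoint C D := by
  by_contra hCD
  have hAD' := disjoint_iff_inter_eq_empty.1 hAD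
  exact hH ⟨A, hA, C, hC, D, hD, not_disjoint_iff_nonempty_inter.1 hAC,
    not_disjoint_iff_nonempty_inter.1 hCD, hAD',
    subset_empty.1 (hAD' ▸ inter_subset_inter inter_subset_left subset_rfl)⟩

section Codegree

variable {H : Finset (Finset α)} {V : Finset α} {k : ℕ}

theorem codegree_le_choose (hV : ∀ A ∈ H, A ⊆ V) (hH : ∀ A ∈ H, #A = k) (S : Finset α) :
    codegree H S ≤ (#V - #S).choose (k - #S) := by
  obtain h | ⟨A₀, hA₀⟩ := ({A ∈ H | S ⊆ A} : Finset _).eq_empty_or_nonempty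
  · simp [codegree, h]
  have hSV : S ⊆ V := (mem_filter.1 hA₀).2.trans (hV _ (mem_filter.1 hA₀).1)
  rw [← card_sdiff_of_subset hSV, ← card_powersetCard]
  refine card_le_card_of_injOn (· \ S) (fun A hA => ?_) (fun A hA B hB hAB => ?_)
  · obtain ⟨hAH, hSA⟩ := mem_filter.1 hA
    rw [mem_coe, mem_powersetCard, card_sdiff_of_subset hSA, hH A hAH]
    exact ⟨sdiff_subset_sdiff (hV A hAH) le_rfl, rfl⟩
  · rw [← sdiff_union_of_subset (mem_filter.1 hA).2, ← sdiff_union_of_subset (mem_filter.1 hB).2]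
    exact congrArg (· ∪ S) hAB

theorem codegree_le (hk : 1 ≤ k) (hV : ∀ A ∈ H, A ⊆ V) (hH : ∀ A ∈ H, #A = k) {E : Finset α}
    (hE : #E = k - 1) : codegree H E ≤ #V - k + 1 := by
  have h := codegree_le_choose hV hH E
  rw [hE, show k - (k - 1) = 1 by omega, Nat.choose_one_right] at h
  exact h.trans (by omega)

theorem codegree_le_one (hk : 1 ≤ k) (hV : ∀ A ∈ H, A ⊆ V) (hH : ∀ A ∈ H, #A = k) {v : α}
    (hv : ∀ A ∈ H, v ∈ A) {E : Finset α} (hE : #E = k - 1) (hvE : v ∉ E) : codegree H E ≤ 1 := by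
  have hcongr : codegree H E = codegree H (insert v E) :=
    congrArg card (filter_congr fun A hA => by rw [insert_subset_iff, and_iff_right (hv A hA)])
  have h := codegree_le_choose hV hH (insert v E)
  rwa [card_insert_of_notMem hvE, hE, show k - 1 + 1 = k by omega, Nat.sub_self,
    Nat.choose_zero_right, ← hcongr] at h

theorem card_le_of_intersecting (hV : ∀ A ∈ H, A ⊆ V) (hH : ∀ A ∈ H, #A = k)
    (hint : ∀ A ∈ H, ∀ B ∈ H, ¬ Disjoint A B) (hns : ∀ v, ∃ A ∈ H, v ∉ A) :
    #H ≤ k * (k * (#V - 2).choose (k - 2)) := by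
  obtain rfl | ⟨A₀, hA₀⟩ := H.eq_empty_or_nonempty
  · simp
  have hdeg : ∀ x, #{A ∈ H | x ∈ A} ≤ k * (#V - 2).choose (k - 2) := fun x => by
    obtain ⟨B, hB, hxB⟩ := hns x
    calc #{A ∈ H | x ∈ A} ≤ #(B.biUnion fun b => {A ∈ H | {x, b} ⊆ A}) :=
          card_le_card fun A hA => by
            obtain ⟨hAH, hxA⟩ := mem_filter.1 hA
            obtain ⟨b, hbA, hbB⟩ := not_disjoint_iff.1 (hint A hAH B hB)
            exact mem_biUnion.2 ⟨b, hbB, mem_filter.2 ⟨hAH, insert_subset hxA (by simpa)⟩⟩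
      _ ≤ #B * (#V - 2).choose (k - 2) := card_biUnion_le_card_mul _ _ _ fun b hb => by
          have h := codegree_le_choose hV hH {x, b}
          rwa [card_pair fun h : x = b => hxB (h ▸ hb)] at h
      _ = k * (#V - 2).choose (k - 2) := by rw [hH B hB]
  calc #H ≤ #(A₀.biUnion fun x => {A ∈ H | x ∈ A}) := card_le_card fun A hA => by
        obtain ⟨x, hxA, hxA₀⟩ := not_disjoint_iff.1 (hint A hA A₀ hA₀)
        exact mem_biUnion.2 ⟨x, hxA₀, mem_filter.2 ⟨hA, hxA⟩⟩
    _ ≤ #A₀ * (k * (#V - 2).choose (k - 2)) := card_biUnion_le_card_mul _ _ _ fun x _ => hdeg x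
    _ = k * (k * (#V - 2).choose (k - 2)) := by rw [hH A₀ hA₀]

variable [Fintype α]

theorem sum_codegree (hk : 1 ≤ k) (hH : ∀ A ∈ H, #A = k) :
    ∑ E ∈ univ.powersetCard (k - 1), codegree H E = k * #H := by
  have h := sum_card_bipartiteAbove_eq_sum_card_bipartiteBelow
    (s := univ.powersetCard (k - 1)) (t := H) (r := fun E A => E ⊆ A)
  have hbelow : ∀ A ∈ H, #((univ.powersetCard (k - 1)).bipartiteBelow (· ⊆ ·) A) = k := by
    intro A hA
    have : (univ.powersetCard (k - 1)).bipartiteBelow (· ⊆ ·) A = A.powersetCard (k - 1) := by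
      ext E
      simp [bipartiteBelow, mem_powersetCard, and_comm]
    rw [this, card_powersetCard, hH A hA, Nat.choose_symm (by omega), Nat.choose_one_right]
  rw [sum_congr rfl hbelow, sum_const, smul_eq_mul, mul_comm] at h
  exact h

theorem co2_le_mul (hk : 1 ≤ k) (hV : ∀ A ∈ H, A ⊆ V) (hH : ∀ A ∈ H, #A = k) :
    co2 k H ≤ (#V - k + 1) * (k * #H) := by
  calc co2 k H ≤ ∑ E ∈ univ.powersetCard (k - 1), (#V - k + 1) * codegree H E := by
        refine sum_le_sum fun E hE => ?_
        rw [sq]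
        exact Nat.mul_le_mul_right _ (codegree_le hk hV hH (mem_powersetCard.1 hE).2)
    _ = (#V - k + 1) * (k * #H) := by rw [← mul_sum, sum_codegree hk hH]

theorem co2_le_of_card_lt (hk : 1 ≤ k) (hV : ∀ A ∈ H, A ⊆ V) (hH : ∀ A ∈ H, #A = k) {K : ℕ}
    (hVK : #V < K) : co2 k H ≤ K * (k * K.choose k) :=
  (co2_le_mul hk hV hH).trans <| Nat.mul_le_mul (by omega) <|
    Nat.mul_le_mul_left k <| (card_le_choose hV hH).trans (Nat.choose_le_choose k hVK.le)

theorem co2_eq_sum_powersetCard (hV : ∀ A ∈ H, A ⊆ V) :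
    co2 k H = ∑ E ∈ V.powersetCard (k - 1), codegree H E ^ 2 := by
  refine (sum_subset (fun E hE => ?_) fun E hE hEV => ?_).symm
  · exact mem_powersetCard.2 ⟨subset_univ E, (mem_powersetCard.1 hE).2⟩
  · suffices {A ∈ H | E ⊆ A} = ∅ by simp [codegree, this]
    exact filter_eq_empty_iff.2 fun A hA hEA =>
      hEV (mem_powersetCard.2 ⟨hEA.trans (hV A hA), mem_powersetCard_univ.1 hE⟩)

theorem co2_le_starCo2 (hk : 2 ≤ k) {v : α} (hv : ∀ A ∈ H, v ∈ A) (hV : ∀ A ∈ H, A ⊆ V)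
    (hvV : v ∈ V) (hH : ∀ A ∈ H, #A = k) (hkV : k ≤ #V) : co2 k H ≤ starCo2 k #V := by
  set W := V.erase v
  have hvW : v ∉ W := notMem_erase v V
  calc co2 k H = ∑ E ∈ (insert v W).powersetCard (k - 2 + 1), codegree H E ^ 2 := by
        rw [co2_eq_sum_powersetCard hV, insert_erase hvV, show k - 2 + 1 = k - 1 by omega]
    _ = ∑ E ∈ W.powersetCard (k - 1), codegree H E ^ 2 +
          ∑ F ∈ W.powersetCard (k - 2), codegree H (insert v F) ^ 2 := by
        rw [sum_powersetCard_succ_insert hvW, show k - 2 + 1 = k - 1 by omega]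
    _ ≤ ∑ E ∈ W.powersetCard (k - 1), 1 + ∑ F ∈ W.powersetCard (k - 2), (#V - k + 1) ^ 2 := by
        refine add_le_add (sum_le_sum fun E hE => ?_) (sum_le_sum fun F hF => ?_)
        · obtain ⟨hEW, hE⟩ := mem_powersetCard.1 hE
          exact pow_le_one₀ (Nat.zero_le _)
            (codegree_le_one (by omega) hV hH hv hE fun h => hvW (hEW h))
        · obtain ⟨hFW, hF⟩ := mem_powersetCard.1 hF
          refine Nat.pow_le_pow_left (codegree_le (by omega) hV hH ?_) 2
          rw [card_insert_of_notMem fun h => hvW (hFW h), hF]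
          omega
    _ = starCo2 k #V := by
        rw [sum_const, sum_const, card_powersetCard, card_powersetCard, card_erase_of_mem hvV,
          starCo2_eq hk hkV]
        simp

theorem co2_le_starCo2_card_sup_id (hk : 2 ≤ k) (hH : ∀ A ∈ H, #A = k) {v : α}
    (hv : ∀ A ∈ H, v ∈ A) {C : Finset α} (hC : C ∈ H) : co2 k H ≤ starCo2 k #(H.sup id) :=
  co2_le_starCo2 hk hv (fun _ => le_sup (f := id)) (le_sup (f := id) hC (hv C hC)) hH
    (hH C hC ▸ card_le_card_sup_id hC)

theorem co2_fullStar_le (hk : 2 ≤ k) (v : α) (hkα : k ≤ Fintype.card α) :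
    co2 k (fullStar k v) ≤ starCo2 k (Fintype.card α) := by
  rw [← card_univ]
  exact co2_le_starCo2 hk (fun A hA => (mem_fullStar.1 hA).2) (fun A _ => subset_univ A)
    (mem_univ v) (fun A hA => (mem_fullStar.1 hA).1) (by rwa [card_univ])

theorem co2_lt_co2 {H' : Finset (Finset α)} (hH' : ∀ A ∈ H', #A = k) (h : H ⊂ H') :
    co2 k H < co2 k H' := by
  obtain ⟨A, hA', hA⟩ := exists_of_ssubset h
  obtain ⟨E, hEA, hE⟩ := exists_subset_card_eq (show k - 1 ≤ #A by rw [hH' A hA']; omega)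
  refine sum_lt_sum (fun E _ => Nat.pow_le_pow_left ?_ 2) ⟨E, mem_powersetCard_univ.2 hE, ?_⟩
  · exact card_le_card (filter_subset_filter _ h.subset)
  refine Nat.pow_lt_pow_left (card_lt_card ?_) two_ne_zero
  exact (ssubset_iff_of_subset (filter_subset_filter _ h.subset)).2
    ⟨A, mem_filter.2 ⟨hA', hEA⟩, fun h => hA (mem_filter.1 h).1⟩

theorem co2_lt_starCo2_of_intersecting (hk : 2 ≤ k) (hV : ∀ A ∈ H, A ⊆ V)
    (hH : ∀ A ∈ H, #A = k) (hint : ∀ A ∈ H, ∀ B ∈ H, ¬ Disjoint A B)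
    (hns : ∀ v, ∃ A ∈ H, v ∉ A) (hV_big : k ^ 3 + k ≤ #V) : co2 k H < starCo2 k #V := by
  have h₁ := co2_le_mul (by omega) hV hH
  have h₂ := Nat.mul_le_mul_left k (card_le_of_intersecting hV hH hint hns)
  have h₃ := Nat.choose_le_choose (k - 2) (show #V - 2 ≤ #V - 1 by omega)
  have h₄ : 1 ≤ (#V - 1).choose (k - 1) := Nat.choose_pos (by omega)
  have hx : k ^ 3 ≤ #V - k + 1 := by omega
  rw [starCo2_eq hk (by omega)]
  generalize #V - k + 1 = x at *
  calc co2 k H ≤ x * (k ^ 3 * (#V - 2).choose (k - 2)) :=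
        h₁.trans (Nat.mul_le_mul_left x (by linarith))
    _ ≤ x * (x * (#V - 1).choose (k - 2)) := Nat.mul_le_mul_left x (Nat.mul_le_mul hx h₃)
    _ < (#V - 1).choose (k - 1) + (#V - 1).choose (k - 2) * x ^ 2 := by nlinarith

end Codegree

section Split

variable {H : Finset (Finset α)} (p : Finset α → Prop) [DecidablePred p]

theorem card_sup_filter_add_card_sup_filter_not_le
    (hp : ∀ C ∈ H, ∀ D ∈ H, p C → ¬ p D → Disjoint C D) :
    #({A ∈ H | p A}.sup id) + #({A ∈ H | ¬ p A}.sup id) ≤ #(H.sup id) := by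
  rw [← card_union_of_disjoint]
  · exact card_le_card (union_subset (sup_mono (filter_subset _ _)) (sup_mono (filter_subset _ _)))
  · refine Finset.disjoint_sup_left.2 fun C hC => Finset.disjoint_sup_right.2 fun D hD => ?_
    exact hp C (mem_filter.1 hC).1 D (mem_filter.1 hD).1 (mem_filter.1 hC).2 (mem_filter.1 hD).2

theorem co2_eq_co2_filter_add_co2_filter_not [Fintype α] {k : ℕ} (hk : 2 ≤ k)
    (hp : ∀ C ∈ H, ∀ D ∈ H, p C → ¬ p D → Disjoint C D) :
    co2 k H = co2 k {A ∈ H | p A} + co2 k {A ∈ H | ¬ p A} := by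
  rw [co2, co2, co2, ← sum_add_distrib]
  refine sum_congr rfl fun E hE => ?_
  have hE : E ≠ ∅ := fun h => by rw [mem_powersetCard_univ, h] at hE; simp at hE; omega
  have hsplit : codegree H E = codegree {A ∈ H | p A} E + codegree {A ∈ H | ¬ p A} E := by
    rw [codegree, codegree, codegree, filter_comm, filter_comm (fun A => ¬ p A),
      card_filter_add_card_filter_not]
  have hzero : codegree {A ∈ H | p A} E = 0 ∨ codegree {A ∈ H | ¬ p A} E = 0 := by
    by_contra! h
    obtain ⟨C, hC⟩ := card_pos.1 (Nat.pos_of_ne_zero h.1)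
    obtain ⟨D, hD⟩ := card_pos.1 (Nat.pos_of_ne_zero h.2)
    simp only [mem_filter] at hC hD
    exact hE ((disjoint_self_iff_empty E).1 (disjoint_of_subset_left hC.2
      (disjoint_of_subset_right hD.2 (hp C hC.1.1 D hD.1.1 hC.1.2 hD.1.2))))
  rw [hsplit]
  rcases hzero with h | h <;> rw [h] <;> ring

end Split

/-- Exceeds `co₂` of every `k`-graph on fewer than `k³ + k` vertices, by `co2_le_of_card_lt`. -/
def smallCo2Bound (k : ℕ) : ℕ := (k ^ 3 + k) * (k * (k ^ 3 + k).choose k) + 1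

/-- In the bound, `s` counts pieces on fewer than `k³ + k` vertices and `t` is the number of
vertices of the other pieces. -/
theorem exists_co2_lt [Fintype α] [Nonempty α] {k : ℕ} (hk : 2 ≤ k) (H : Finset (Finset α))
    (hH : ∀ A ∈ H, #A = k) (hpf : MinPathFree H) (hns : ∀ v, ∃ A ∈ H, v ∉ A) :
    ∃ s t, t + s ≤ #(H.sup id) ∧ co2 k H < starCo2 k t + s * smallCo2Bound k := by
  induction H using Finset.strongInduction with
  | H H ih =>
  have hV : ∀ A ∈ H, A ⊆ H.sup id := fun A hA => le_sup (f := id) hA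
  obtain ⟨A₀, hA₀, -⟩ := hns (Classical.arbitrary α)
  have hkV : k ≤ #(H.sup id) := hH A₀ hA₀ ▸ card_le_card_sup_id hA₀
  by_cases hsmall : #(H.sup id) < k ^ 3 + k
  · refine ⟨1, 0, by omega, ?_⟩
    have := co2_le_of_card_lt (by omega) hV hH hsmall
    simp only [smallCo2Bound]
    omega
  by_cases hint : ∀ A ∈ H, ∀ B ∈ H, ¬ Disjoint A B
  · exact ⟨0, #(H.sup id), by omega,
      by simpa using co2_lt_starCo2_of_intersecting hk hV hH hint hns (by omega)⟩
  push Not at hint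
  obtain ⟨A, hA, B, hB, hAB⟩ := hint
  have hcross : ∀ C ∈ H, ∀ D ∈ H, Disjoint C A → ¬ Disjoint D A → Disjoint C D :=
    fun C hC D hD hCA hDA => (hpf.disjoint hA hD hC (fun h => hDA h.symm) hCA.symm).symm
  have hpart : ∀ G ⊂ H, G.Nonempty → (co2 k G ≤ starCo2 k #(G.sup id) ∧ k ≤ #(G.sup id)) ∨
      ∃ s t, t + s ≤ #(G.sup id) ∧ co2 k G < starCo2 k t + s * smallCo2Bound k := by
    rintro G hG ⟨C, hC⟩
    have hGH : ∀ A ∈ G, #A = k := fun A hA => hH A (hG.subset hA)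
    by_cases hstar : ∃ v, ∀ A ∈ G, v ∈ A
    · obtain ⟨v, hv⟩ := hstar
      exact Or.inl ⟨co2_le_starCo2_card_sup_id hk hGH hv hC, hGH C hC ▸ card_le_card_sup_id hC⟩
    · push Not at hstar
      exact Or.inr (ih G hG hGH (hpf.mono hG.subset) hstar)
  have hAA : ¬ Disjoint A A := by
    rw [disjoint_self_iff_empty, ← ne_eq, ← nonempty_iff_ne_empty, ← card_pos, hH A hA]
    omega
  obtain ⟨s, t, hst, hlt⟩ := exists_starCo2_add_lt hk
    (hpart {C ∈ H | Disjoint C A} (filter_ssubset.2 ⟨A, hA, hAA⟩) ⟨B, mem_filter.2 ⟨hB, hAB.symm⟩⟩)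
    (hpart {C ∈ H | ¬ Disjoint C A} (filter_ssubset.2 ⟨B, hB, not_not.2 hAB.symm⟩)
      ⟨A, mem_filter.2 ⟨hA, hAA⟩⟩)
  exact ⟨s, t, hst.trans (card_sup_filter_add_card_sup_filter_not_le _ hcross),
    by rwa [co2_eq_co2_filter_add_co2_filter_not _ hk hcross]⟩

def threshold (k : ℕ) : ℕ := starCo2 k (smallCo2Bound k + k) + (k + 1) * smallCo2Bound k + k

end MinimalThreePath

open MinimalThreePath

/-- ℓ₂-norm extremal result for minimal 3-paths: for `k ≥ 3` and `n` large enough, every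
`k`-uniform hypergraph on `[n]` with no three edges `E₁, E₂, E₃` such that `E₁ ∩ E₂ ≠ ∅`,
`E₂ ∩ E₃ ≠ ∅`, `E₁ ∩ E₃ = ∅` and `E₁ ∩ E₂ ∩ E₃ = ∅` satisfies
`co₂(H) ≤ C(n-1,k-1)·(1 + (n-k+1)(k-1))`, with equality only for a star. -/
theorem min_3path_l2 (k : ℕ) (hk : 3 ≤ k) :
    ∃ n₀ : ℕ, ∀ n : ℕ, n₀ ≤ n → ∀ H : Finset (Finset (Fin n)),
      (∀ e ∈ H, e.card = k) →
      (¬ ∃ E₁ ∈ H, ∃ E₂ ∈ H, ∃ E₃ ∈ H,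
        (E₁ ∩ E₂).Nonempty ∧ (E₂ ∩ E₃).Nonempty ∧ E₁ ∩ E₃ = ∅ ∧
        E₁ ∩ E₂ ∩ E₃ = ∅) →
      ((∑ E ∈ Finset.univ.powersetCard (k - 1), ((H.filter fun A => E ⊆ A).card) ^ 2 ≤
          (n - 1).choose (k - 1) * (1 + (n - k + 1) * (k - 1))) ∧
        ((∑ E ∈ Finset.univ.powersetCard (k - 1), ((H.filter fun A => E ⊆ A).card) ^ 2 =
            (n - 1).choose (k - 1) * (1 + (n - k + 1) * (k - 1))) →
          ∃ v : Fin n, H = (Finset.univ.powersetCard k).filter fun A => v ∈ A)) := by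
  refine ⟨threshold k, fun n hn H hH hpf => ?_⟩
  change co2 k H ≤ starCo2 k n ∧ (co2 k H = starCo2 k n → ∃ v, H = fullStar k v)
  have hkn : k ≤ n := by unfold threshold at hn; omega
  have : Nonempty (Fin n) := ⟨⟨0, by omega⟩⟩
  by_cases hstar : ∃ v, ∀ A ∈ H, v ∈ A
  · obtain ⟨v, hv⟩ := hstar
    have hstar_le : co2 k (fullStar k v) ≤ starCo2 k n := by
      simpa using co2_fullStar_le (by omega) v (by simpa using hkn)
    have hsub : H ⊆ fullStar k v := fun A hA => mem_fullStar.2 ⟨hH A hA, hv A hA⟩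
    obtain rfl | hss := eq_or_ssubset_of_subset hsub
    · exact ⟨hstar_le, fun _ => ⟨v, rfl⟩⟩
    · have := co2_lt_co2 (fun A hA => (mem_fullStar.1 hA).1) hss
      exact ⟨by omega, fun h => by omega⟩
  · push Not at hstar
    obtain ⟨s, t, hst, hlt⟩ := exists_co2_lt (by omega) H hH hpf hstar
    have := starCo2_add_mul_le_of_le (by omega) hn (hst.trans ((card_le_univ _).trans_eq (by simp)))
    omega
end
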